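/- arXiv:2112.13061 — 12 statements merged into one kernel-verified Lean document; each statement's English description precedes it below -/
import Mathlib

section
/- Let φ : V × V → W be a flat bilinear map and let X ∈ V be a regular element of φ (i.e. the rank of the linear map φ_X : Y ↦ φ(X,Y) is maximal among all elements of V). Then span{φ(Y,Z) : Y ∈ V, Z ∈ ker φ_X} is contained in φ_X(V) ∩ φ_X(V)^⊥, where φ_X(V)^⊥ denotes the orthogonal complement of the image φ_X(V) with respect to the given symmetric bilinear form on W. -/
/-!
Orthogonality is immediate from flatness: `⟨φ(X,T), φ(Y,Z)⟩ = ⟨φ(X,Z), φ(Y,T)⟩ = 0` when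
`φ_X Z = 0`. Containment in `φ_X(V)` only uses regularity, through lower semicontinuity of the
rank: if `φ(Y,Z) ∉ φ_X(V)`, then a basis `φ_X u_i` of `φ_X(V)` together with `φ(Y,Z)` is linearly
independent, hence so is its small perturbation `φ_{X+tY} u_i`, `φ(Y,Z) = φ_{X+tY}(t⁻¹ Z)` for
some `t ≠ 0`, and `φ_{X+tY}` has larger rank than `φ_X`.
-/

open Module Filter Topology

theorem LinearIndependent.eventually_add_smul {𝕜 W ι : Type*} [NontriviallyNormedField 𝕜]
    [CompleteSpace 𝕜] [AddCommGroup W] [Module 𝕜 W] [FiniteDimensional 𝕜 W] [Finite ι]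
    {v : ι → W} (hv : LinearIndependent 𝕜 v) (c : ι → W) :
    ∀ᶠ t in 𝓝 (0 : 𝕜), LinearIndependent 𝕜 (v + t • c) := by
  let e := (finBasis 𝕜 W).equivFun
  have hcomp : ∀ t : 𝕜, e ∘ (v + t • c) = e ∘ v + t • (e ∘ c) := fun t ↦ by
    ext1 i; simp
  have hlim : Tendsto (fun t : 𝕜 ↦ e ∘ v + t • (e ∘ c)) (𝓝 0) (𝓝 (e ∘ v)) := by
    have : Continuous fun t : 𝕜 ↦ e ∘ v + t • (e ∘ c) := by fun_prop
    simpa using this.tendsto 0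
  refine (hlim.eventually (hv.map' e.toLinearMap e.ker).eventually).mono fun t ht ↦ ?_
  rw [← hcomp] at ht
  exact ht.of_comp e.toLinearMap

theorem LinearMap.mem_range_of_finrank_range_add_smul_le {𝕜 V W : Type*}
    [NontriviallyNormedField 𝕜] [CompleteSpace 𝕜] [AddCommGroup V] [Module 𝕜 V]
    [AddCommGroup W] [Module 𝕜 W] [FiniteDimensional 𝕜 W] (f g : V →ₗ[𝕜] W)
    (hmax : ∀ t : 𝕜, finrank 𝕜 (range (f + t • g)) ≤ finrank 𝕜 (range f))
    {z : V} (hz : f z = 0) : g z ∈ range f := by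
  by_contra hgz
  set r := finrank 𝕜 (range f)
  let b := finBasis 𝕜 (range f)
  choose u hu using fun i ↦ (b i).2
  have hfu : LinearIndependent 𝕜 (f ∘ u) := by
    have : f ∘ u = (range f).subtype ∘ b := funext hu
    rw [this]
    exact b.linearIndependent.map' _ (range f).ker_subtype
  have hspan : Submodule.span 𝕜 (Set.range (f ∘ u)) ≤ range f :=
    Submodule.span_le.2 (Set.range_subset_iff.2 fun i ↦ mem_range_self f (u i))
  have hv : LinearIndependent 𝕜 (Fin.snoc (f ∘ u) (g z) : Fin (r + 1) → W) :=
    linearIndependent_finSnoc.2 ⟨hfu, fun h ↦ hgz (hspan h)⟩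
  let c : Fin (r + 1) → W := Fin.snoc (g ∘ u) 0
  obtain ⟨t, hind, ht⟩ := (((hv.eventually_add_smul c).filter_mono nhdsWithin_le_nhds).and
    (self_mem_nhdsWithin (s := {0}ᶜ))).exists
  set F : Fin (r + 1) → W := Fin.snoc (f ∘ u) (g z) + t • c
  have hF : ∀ i, F i ∈ range (f + t • g) := by
    refine Fin.lastCases ⟨t⁻¹ • z, ?_⟩ fun i ↦ ⟨u i, ?_⟩
    · simp [F, c, hz, smul_smul, inv_mul_cancel₀ ht]
    · simp [F, c]
  have hcard := (hind.of_comp (range (f + t • g)).subtype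
    (v := fun i ↦ ⟨F i, hF i⟩)).fintype_card_le_finrank
  simpa using hcard.trans (hmax t)

theorem LinearMap.BilinForm.apply_mem_orthogonal_range_of_flat {R V W : Type*} [CommSemiring R]
    [AddCommMonoid V] [Module R V] [AddCommMonoid W] [Module R W]
    (B : LinearMap.BilinForm R W) (φ : V →ₗ[R] V →ₗ[R] W)
    (hflat : ∀ X Y Z T : V, B (φ X Y) (φ Z T) = B (φ X T) (φ Z Y))
    {X Z : V} (hZ : φ X Z = 0) (Y : V) : φ Y Z ∈ B.orthogonal (LinearMap.range (φ X)) := by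
  rw [LinearMap.BilinForm.mem_orthogonal_iff]
  rintro _ ⟨T, rfl⟩
  rw [hflat, hZ, map_zero, LinearMap.zero_apply]

theorem stmt_0_general
    {V W : Type*} [AddCommGroup V] [Module ℝ V]
    [AddCommGroup W] [Module ℝ W] [FiniteDimensional ℝ W]
    (B : LinearMap.BilinForm ℝ W)
    (φ : V →ₗ[ℝ] V →ₗ[ℝ] W)
    (hflat : ∀ X Y Z T : V, B (φ X Y) (φ Z T) = B (φ X T) (φ Z Y))
    (X : V)
    (hreg : ∀ Z : V,
      finrank ℝ (LinearMap.range (φ Z)) ≤ finrank ℝ (LinearMap.range (φ X))) :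
    Submodule.span ℝ {w : W | ∃ Y : V, ∃ Z ∈ LinearMap.ker (φ X), φ Y Z = w} ≤
      LinearMap.range (φ X) ⊓ B.orthogonal (LinearMap.range (φ X)) := by
  rw [Submodule.span_le]
  rintro _ ⟨Y, Z, hZ, rfl⟩
  rw [LinearMap.mem_ker] at hZ
  refine ⟨(φ X).mem_range_of_finrank_range_add_smul_le (φ Y) (fun t ↦ ?_) hZ,
    B.apply_mem_orthogonal_range_of_flat φ hflat hZ Y⟩
  rw [← map_smul, ← map_add]
  exact hreg (X + t • Y)

/-- Lemma (flat bilinear forms): if `X` is a regular element of a flat bilinear map `φ`,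
then the span of `φ(V × ker φ_X)` is contained in `φ_X(V) ∩ φ_X(V)^⊥`. -/
theorem stmt_0
    {V W : Type*} [AddCommGroup V] [Module ℝ V] [FiniteDimensional ℝ V]
    [AddCommGroup W] [Module ℝ W] [FiniteDimensional ℝ W]
    (B : LinearMap.BilinForm ℝ W) (hBsymm : ∀ x y : W, B x y = B y x)
    (φ : V →ₗ[ℝ] V →ₗ[ℝ] W)
    (hflat : ∀ X Y Z T : V, B (φ X Y) (φ Z T) = B (φ X T) (φ Z Y))
    (X : V)
    (hreg : ∀ Z : V,
      finrank ℝ (LinearMap.range (φ Z)) ≤ finrank ℝ (LinearMap.range (φ X))) :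
    Submodule.span ℝ {w : W | ∃ Y : V, ∃ Z ∈ LinearMap.ker (φ X), φ Y Z = w} ≤
      LinearMap.range (φ X) ⊓ B.orthogonal (LinearMap.range (φ X)) :=
  stmt_0_general B φ hflat X hreg
end

section
/- Let ρ : V × V → U be a symmetric bilinear map, let J be a complex structure on V, define σ : V × V → U × U by σ(X,Y) = (ρ(X,Y), ρ(X,JY)), and let V₁, V₂ ⊆ V be linear subspaces with V₂ invariant under J. Let S(σ₀) = span{σ(X,Y) : X ∈ V₁, Y ∈ V₂} be the subspace of U × U spanned by the image of the restriction σ₀ = σ|_{V₁ × V₂}. Then the linear map T : U × U → U × U given by T(ξ,η) = (η,-ξ) maps S(σ₀) into itself, and its restriction to S(σ₀) is a complex structure on S(σ₀) (i.e. T ∘ T = -id on S(σ₀)). -/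
/-- The map `T(ξ,η) = (η,-ξ)` preserves `S(σ₀) = span σ(V₁ × V₂)` and restricts
to a complex structure on it. -/
theorem stmt_3
    {V U : Type*} [AddCommGroup V] [Module ℝ V] [FiniteDimensional ℝ V]
    [AddCommGroup U] [Module ℝ U] [FiniteDimensional ℝ U]
    (J : V →ₗ[ℝ] V) (hJ : ∀ v : V, J (J v) = -v)
    (ρ : V →ₗ[ℝ] V →ₗ[ℝ] U) (hρ : ∀ X Y : V, ρ X Y = ρ Y X)
    (σ : V → V → U × U) (hσ : ∀ X Y : V, σ X Y = (ρ X Y, ρ X (J Y)))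
    (V₁ V₂ : Submodule ℝ V) (hV₂ : ∀ v ∈ V₂, J v ∈ V₂)
    (T : (U × U) →ₗ[ℝ] (U × U)) (hT : ∀ w : U × U, T w = (w.2, -w.1)) :
    ∀ w ∈ Submodule.span ℝ {w : U × U | ∃ X ∈ V₁, ∃ Y ∈ V₂, σ X Y = w},
      T w ∈ Submodule.span ℝ {w : U × U | ∃ X ∈ V₁, ∃ Y ∈ V₂, σ X Y = w} ∧
      T (T w) = -w := by
  intro w hw
  refine ⟨?_, by rw [hT, hT]; simp [Prod.ext_iff]⟩
  induction hw using Submodule.span_induction with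
  | mem x hx =>
    obtain ⟨X, hX, Y, hY, rfl⟩ := hx
    apply Submodule.subset_span
    refine ⟨X, hX, J Y, hV₂ Y hY, ?_⟩
    rw [hσ, hσ, hT]
    simp [hJ]
  | zero => simp
  | add x y _ _ hx hy => rw [map_add]; exact Submodule.add_mem _ hx hy
  | smul c x _ hx => rw [map_smul]; exact Submodule.smul_mem _ _ hx
end

section
/- Let ρ : V × V → U be a symmetric bilinear map, let J be a complex structure on V, define σ : V × V → U × U by σ(X,Y) = (ρ(X,Y), ρ(X,JY)), and let V₁, V₂ ⊆ V be linear subspaces with V₂ invariant under J. Then the subspace S(σ₀) = span{σ(X,Y) : X ∈ V₁, Y ∈ V₂} of U × U has even dimension. -/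
open Module

theorem even_finrank_of_sq_neg_one {M : Type*} [AddCommGroup M] [Module ℝ M]
    [FiniteDimensional ℝ M] (f : M →ₗ[ℝ] M) (hf : ∀ v, f (f v) = -v) :
    Even (finrank ℝ M) := by
  have hff : f * f = -1 := by
    ext v; simpa using hf v
  let φ : ℂ →+* Module.End ℝ M :=
    { toFun := fun z => z.re • (1 : Module.End ℝ M) + z.im • f
      map_one' := by simp
      map_mul' := by
        intro z w
        simp only [Complex.mul_re, Complex.mul_im]
        rw [sub_smul, add_smul]
        ext v
        simp only [LinearMap.add_apply, LinearMap.sub_apply, LinearMap.smul_apply,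
          Module.End.one_apply, Module.End.mul_apply]
        have := hf v
        simp only [map_add, map_smul, hf, smul_add, smul_neg, smul_smul]
        ring_nf
        abel
      map_zero' := by simp
      map_add' := by
        intro z w
        simp only [Complex.add_re, Complex.add_im, add_smul]
        abel }
  letI : Module ℂ M := Module.compHom M φ
  haveI : IsScalarTower ℝ ℂ M := by
    refine ⟨fun r z m => ?_⟩
    show φ (r • z) m = r • (φ z m)
    simp only [φ, Complex.real_smul, Complex.mul_re, Complex.ofReal_re, Complex.ofReal_im,
      Complex.mul_im, zero_mul, sub_zero, add_zero, zero_add, mul_smul_comm, RingHom.coe_mk,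
      MonoidHom.coe_mk, OneHom.coe_mk]
    simp [mul_smul, smul_add]
  haveI : Module.Finite ℂ M := Module.Finite.of_restrictScalars_finite ℝ ℂ M
  have h := finrank_mul_finrank ℝ ℂ M
  rw [Complex.finrank_real_complex] at h
  exact ⟨finrank ℂ M, by omega⟩
/-- The subspace `S(σ₀) = span σ(V₁ × V₂)` of `U × U` has even dimension. -/
theorem stmt_4
    {V U : Type*} [AddCommGroup V] [Module ℝ V] [FiniteDimensional ℝ V]
    [AddCommGroup U] [Module ℝ U] [FiniteDimensional ℝ U]
    (J : V →ₗ[ℝ] V) (hJ : ∀ v : V, J (J v) = -v)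
    (ρ : V →ₗ[ℝ] V →ₗ[ℝ] U) (hρ : ∀ X Y : V, ρ X Y = ρ Y X)
    (σ : V → V → U × U) (hσ : ∀ X Y : V, σ X Y = (ρ X Y, ρ X (J Y)))
    (V₁ V₂ : Submodule ℝ V) (hV₂ : ∀ v ∈ V₂, J v ∈ V₂) :
    Even (finrank ℝ
      ↥(Submodule.span ℝ {w : U × U | ∃ X ∈ V₁, ∃ Y ∈ V₂, σ X Y = w})) := by
  set s : Set (U × U) := {w : U × U | ∃ X ∈ V₁, ∃ Y ∈ V₂, σ X Y = w} with hs
  set S : Submodule ℝ (U × U) := Submodule.span ℝ s with hS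
  -- the complex structure on U × U
  let K : (U × U) →ₗ[ℝ] (U × U) :=
    (LinearMap.snd ℝ U U).prod (-(LinearMap.fst ℝ U U))
  have hK : ∀ w : U × U, K w = (w.2, -w.1) := fun w => rfl
  have hKs : ∀ w ∈ s, K w ∈ s := by
    rintro w ⟨X, hX, Y, hY, rfl⟩
    refine ⟨X, hX, J Y, hV₂ Y hY, ?_⟩
    rw [hσ, hσ, hK]
    simp [hJ]
  have hKS : ∀ w ∈ S, K w ∈ S := by
    intro w hw
    have : S.map K ≤ S := by
      rw [hS, Submodule.map_span, Submodule.span_le]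
      rintro _ ⟨x, hx, rfl⟩
      exact Submodule.subset_span (hKs x hx)
    exact this (Submodule.mem_map_of_mem hw)
  let f : S →ₗ[ℝ] S := K.restrict hKS
  have hf : ∀ v : S, f (f v) = -v := by
    intro v
    ext <;> simp [f, LinearMap.restrict_apply, hK]
  exact even_finrank_of_sq_neg_one f hf
end

section
/- Let α : V × V → U be a symmetric bilinear map and let β(X,Y) = (α(X,Y)+α(JX,JY), α(X,JY)-α(JX,Y)). Then the kernel N(β) = {Y ∈ V : β(X,Y) = 0 for all X ∈ V} coincides with the subspace {X ∈ V : α(X,JY) = α(JX,Y) for all Y ∈ V}, and it has even dimension. -/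
open Module

theorem even_finrank_of_sq_eq_neg_one {W : Type*} [AddCommGroup W] [Module ℝ W]
    [FiniteDimensional ℝ W] (f : W →ₗ[ℝ] W) (hf : f ∘ₗ f = -LinearMap.id) :
    Even (finrank ℝ W) := by
  have hdet : LinearMap.det f * LinearMap.det f = (-1 : ℝ) ^ finrank ℝ W := by
    rw [← LinearMap.det_comp, hf]
    have : (-LinearMap.id : W →ₗ[ℝ] W) = (-1 : ℝ) • LinearMap.id := by
      ext x; simp
    rw [this, LinearMap.det_smul, LinearMap.det_id, mul_one]
  rcases Nat.even_or_odd (finrank ℝ W) with h | h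
  · exact h
  · exfalso
    rw [h.neg_one_pow] at hdet
    nlinarith [sq_nonneg (LinearMap.det f)]

/-- The kernel `N(β)` of the associated bilinear map `β` equals
`{X : α(X,JY) = α(JX,Y) for all Y}` and has even dimension. -/
theorem stmt_5
    {V U : Type*} [AddCommGroup V] [Module ℝ V] [FiniteDimensional ℝ V]
    [AddCommGroup U] [Module ℝ U] [FiniteDimensional ℝ U]
    (J : V →ₗ[ℝ] V) (hJ : ∀ v : V, J (J v) = -v)
    (α : V →ₗ[ℝ] V →ₗ[ℝ] U) (hα : ∀ X Y : V, α X Y = α Y X)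
    (β : V →ₗ[ℝ] V →ₗ[ℝ] (U × U))
    (hβ : ∀ X Y : V, β X Y = (α X Y + α (J X) (J Y), α X (J Y) - α (J X) Y)) :
    (↑(⨅ X : V, LinearMap.ker (β X)) : Set V)
        = {X : V | ∀ Y : V, α X (J Y) = α (J X) Y} ∧
      Even (finrank ℝ ↥(⨅ X : V, LinearMap.ker (β X))) := by
  set N : Submodule ℝ V := ⨅ X : V, LinearMap.ker (β X) with hN
  have hmem : ∀ Y : V, Y ∈ N ↔ ∀ Z : V, α Y (J Z) = α (J Y) Z := by
    intro Y
    constructor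
    · intro h Z
      have h2 := h
      rw [hN, Submodule.mem_iInf] at h2
      have hz := h2 Z
      rw [LinearMap.mem_ker, hβ] at hz
      have hsnd : α Z (J Y) - α (J Z) Y = 0 := congrArg Prod.snd hz
      have : α Z (J Y) = α (J Z) Y := by linear_combination (norm := abel) hsnd
      rw [hα Y (J Z), ← this, hα Z (J Y)]
    · intro h
      rw [hN, Submodule.mem_iInf]
      intro X
      rw [LinearMap.mem_ker, hβ]
      have h1 : α Y (J X) = α (J Y) X := h X
      have h2 : α Y (J (J X)) = α (J Y) (J X) := h (J X)
      rw [hJ X] at h2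
      have h2' : α (J X) (J Y) = -(α X Y) := by
        rw [hα (J X) (J Y), ← h2]
        simp [hα Y X]
      have h1' : α X (J Y) = α (J X) Y := by
        rw [hα X (J Y), ← h1, hα Y (J X)]
      ext
      · simp [h2']
      · simp [h1']
  have hJN : ∀ x ∈ N, J x ∈ N := by
    intro Y hY
    rw [hmem] at hY ⊢
    intro Z
    have h1 : α Y (J (J Z)) = α (J Y) (J Z) := hY (J Z)
    rw [hJ Z] at h1
    rw [← h1]
    simp [hJ Y, hα Y Z]
  constructor
  · ext Y
    simp only [SetLike.mem_coe, Set.mem_setOf_eq]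
    exact hmem Y
  · have f : ↥N →ₗ[ℝ] ↥N := J.restrict hJN
    exact even_finrank_of_sq_eq_neg_one (J.restrict hJN) (by
      ext x
      simp [LinearMap.restrict_apply, hJ])
end

section
/- Let α : V × V → U be a symmetric bilinear map, let β(X,Y) = (α(X,Y)+α(JX,JY), α(X,JY)-α(JX,Y)), and assume β is flat with respect to the signature-(p,p) bilinear form on U × U. If L ⊆ V is a linear subspace with β(X,Y) = 0 for all X,Y ∈ L, then L is contained in the kernel N(β) = {Y ∈ V : β(X,Y) = 0 for all X ∈ V}. -/
open RealInnerProductSpace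

/-- If `β` is flat and vanishes identically on `L × L` for a subspace `L`,
then `L ⊆ N(β)`. -/
theorem stmt_8
    {V U : Type*} [AddCommGroup V] [Module ℝ V] [FiniteDimensional ℝ V]
    [NormedAddCommGroup U] [InnerProductSpace ℝ U] [FiniteDimensional ℝ U]
    (J : V →ₗ[ℝ] V) (hJ : ∀ v : V, J (J v) = -v)
    (α : V →ₗ[ℝ] V →ₗ[ℝ] U) (hα : ∀ X Y : V, α X Y = α Y X)
    (β : V →ₗ[ℝ] V →ₗ[ℝ] (U × U))
    (hβ : ∀ X Y : V, β X Y = (α X Y + α (J X) (J Y), α X (J Y) - α (J X) Y))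
    (hflat : ∀ X Y Z T : V,
      ⟪(β X Y).1, (β Z T).1⟫ - ⟪(β X Y).2, (β Z T).2⟫ =
        ⟪(β X T).1, (β Z Y).1⟫ - ⟪(β X T).2, (β Z Y).2⟫)
    (L : Submodule ℝ V) (hL : ∀ X ∈ L, ∀ Y ∈ L, β X Y = 0) :
    ∀ Y ∈ L, ∀ X : V, β X Y = 0 := by
  intro Y hY X
  have hYY : β Y Y = 0 := hL Y hY Y hY
  -- symmetry relation : β Y X = ((β X Y).1, -(β X Y).2)
  have hsym1 : (β Y X).1 = (β X Y).1 := by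
    rw [hβ, hβ]; simp [hα Y X, hα (J Y) (J X)]
  have hsym2 : (β Y X).2 = -(β X Y).2 := by
    rw [hβ, hβ]; simp only [hα Y (J X), hα (J Y) X]; abel
  have h := hflat X Y Y X
  rw [hYY] at h
  simp only [Prod.fst_zero, Prod.snd_zero, inner_zero_right, sub_zero, sub_self] at h
  rw [hsym1, hsym2, inner_neg_right] at h
  have h1 : ⟪(β X Y).1, (β X Y).1⟫ + ⟪(β X Y).2, (β X Y).2⟫ = 0 := by linarith
  have e1 : (β X Y).1 = 0 := by
    have := real_inner_self_nonneg (x := (β X Y).1)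
    have := real_inner_self_nonneg (x := (β X Y).2)
    exact inner_self_eq_zero (𝕜 := ℝ) |>.mp (by linarith)
  have e2 : (β X Y).2 = 0 := by
    have := real_inner_self_nonneg (x := (β X Y).1)
    have := real_inner_self_nonneg (x := (β X Y).2)
    exact inner_self_eq_zero (𝕜 := ℝ) |>.mp (by linarith)
  exact Prod.ext e1 e2
end

section
/- Let V have dimension 2n, let U have dimension p with p ≤ n, let α : V × V → U be a symmetric bilinear map, and let β(X,Y) = (α(X,Y)+α(JX,JY), α(X,JY)-α(JX,Y)). If β is flat with respect to the signature-(p,p) bilinear form on U × U, then the nullity ν(β) = dim{Y ∈ V : β(X,Y)=0 for all X} equals 2n - r₀, where r₀ = max{dim B_Z(V) : Z ∈ V} and B_Z Y = β(Z,Y). In particular, ν(β) ≥ 2n - dim S(β), where S(β) = span{β(X,Y) : X,Y ∈ V}. -/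
open Module RealInnerProductSpace Filter Topology

/-! Take `Z₀` with `β Z₀` of maximal rank `r₀`; lower semicontinuity of the rank shows that every
`β X` maps `ker (β Z₀)` into `range (β Z₀)`. As `β` has symmetric first and antisymmetric second
component, flatness for the split form becomes the symmetry
`H(β(X,Y), β(T,Z)) = H(β(X,T), β(Y,Z))` of the positive definite form `H` on `U × U`
(the inner product of `WithLp 2 (U × U)`).
For `Y ∈ ker (β Z₀)` this puts `β(Y,Y)` in `range (β Z₀)` and `H`-orthogonal to it, so
`β(Y,Y) = 0`, and then `H(β(X,Y), β(X,Y)) = H(β(X,X), β(Y,Y)) = 0`. Thus the nullity is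
`dim ker (β Z₀) = 2n - r₀`. -/

namespace LinearMap

variable {V W : Type*} [AddCommGroup V] [Module ℝ V]
  [NormedAddCommGroup W] [NormedSpace ℝ W] [FiniteDimensional ℝ W]

/-- Perturbing `Z₀` to `Z₀ + t • X` keeps the images of a basis of `range (β Z₀)` independent
and adds `β (Z₀ + t • X) (t⁻¹ • Y) = β X Y`, so maximality of the rank forces `β X Y` into
`range (β Z₀)`. -/
theorem apply_mem_range_of_forall_finrank_range_le (β : V →ₗ[ℝ] V →ₗ[ℝ] W) {Z₀ : V}
    (hmax : ∀ Z, finrank ℝ (range (β Z)) ≤ finrank ℝ (range (β Z₀)))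
    {Y : V} (hY : β Z₀ Y = 0) (X : V) : β X Y ∈ range (β Z₀) := by
  by_contra hXY
  set r := finrank ℝ (range (β Z₀))
  let b := finBasisOfFinrankEq ℝ (range (β Z₀)) rfl
  choose y hy using fun i => mem_range.1 (b i).2
  let v : ℝ → Fin (r + 1) → W := fun t =>
    Fin.snoc (β Z₀ ∘ y) (β X Y) + t • (Fin.snoc (β X ∘ y) 0 : Fin (r + 1) → W)
  have hv0 : LinearIndependent ℝ (v 0) := by
    simp only [v, zero_smul, add_zero]
    refine linearIndependent_finSnoc.2 ⟨?_, fun h => hXY ?_⟩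
    · rw [show β Z₀ ∘ y = (range (β Z₀)).subtype ∘ b from funext hy]
      exact b.linearIndependent.map' _ (Submodule.ker_subtype _)
    · refine Submodule.span_le.2 ?_ h
      rintro _ ⟨i, rfl⟩
      exact mem_range_self _ _
  have hv : Continuous v := continuous_const.add (continuous_id.smul continuous_const)
  obtain ⟨t, hvt, ht⟩ : ∃ t : ℝ, LinearIndependent ℝ (v t) ∧ t ≠ 0 :=
    (((hv.continuousAt.eventually hv0.eventually).filter_mono nhdsWithin_le_nhds).and
      (self_mem_nhdsWithin : ∀ᶠ t in 𝓝[≠] (0 : ℝ), t ≠ 0)).exists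
  have hvt_mem : ∀ i, v t i ∈ range (β (Z₀ + t • X)) := by
    intro i
    induction i using Fin.lastCases with
    | last =>
      refine ⟨t⁻¹ • Y, ?_⟩
      simp [v, hY, smul_smul, ht]
    | cast i => exact ⟨y i, by simp [v]⟩
  have hle : r + 1 ≤ finrank ℝ (range (β (Z₀ + t • X))) := by
    simpa [finrank_span_eq_card hvt] using
      Submodule.finrank_mono (Submodule.span_le.2 (Set.range_subset_iff.2 hvt_mem))
  have := hmax (Z₀ + t • X)
  omega

end LinearMap

section Flat

variable {V U : Type*} [AddCommGroup V] [Module ℝ V]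
  [NormedAddCommGroup U] [InnerProductSpace ℝ U]

def IsFlat (β : V →ₗ[ℝ] V →ₗ[ℝ] (U × U)) : Prop :=
  ∀ X Y Z T : V, ⟪(β X Y).1, (β Z T).1⟫ - ⟪(β X Y).2, (β Z T).2⟫ =
    ⟪(β X T).1, (β Z Y).1⟫ - ⟪(β X T).2, (β Z Y).2⟫

variable {β : V →ₗ[ℝ] V →ₗ[ℝ] (U × U)}
  (h₁ : ∀ X Y, (β X Y).1 = (β Y X).1) (h₂ : ∀ X Y, (β X Y).2 = -(β Y X).2)
include h₁ h₂

theorem inner_toLp_apply_comm_of_isFlat (hflat : IsFlat β) (X Y T Z : V) :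
    ⟪WithLp.toLp 2 (β X Y), WithLp.toLp 2 (β T Z)⟫ =
      ⟪WithLp.toLp 2 (β X T), WithLp.toLp 2 (β Y Z)⟫ := by
  simp only [WithLp.prod_inner_apply]
  rw [h₁ T Z, h₂ T Z, h₁ Y Z, h₂ Y Z, inner_neg_right, inner_neg_right]
  linarith [hflat X Y Z T]

theorem iInf_ker_eq_ker_of_isFlat [FiniteDimensional ℝ U] (hflat : IsFlat β) {Z₀ : V}
    (hmax : ∀ Z, finrank ℝ (LinearMap.range (β Z)) ≤ finrank ℝ (LinearMap.range (β Z₀))) :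
    ⨅ X, LinearMap.ker (β X) = LinearMap.ker (β Z₀) := by
  have hH := inner_toLp_apply_comm_of_isFlat h₁ h₂ hflat
  refine le_antisymm (iInf_le _ Z₀) fun Y hY => Submodule.mem_iInf _ |>.2 fun X => ?_
  rw [LinearMap.mem_ker] at hY ⊢
  have hYZ₀ : β Y Z₀ = 0 := Prod.ext (by rw [h₁, hY]) (by rw [h₂, hY]; simp)
  have hYY₂ : (β Y Y).2 = 0 :=
    have := IsAddTorsionFree.of_isTorsionFree ℝ U
    self_eq_neg.1 (h₂ Y Y)
  have hYY : β Y Y = 0 := by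
    obtain ⟨T, hT⟩ := β.apply_mem_range_of_forall_finrank_range_le hmax hY Y
    rw [← WithLp.toLp_eq_zero 2, ← inner_self_eq_zero (𝕜 := ℝ)]
    calc ⟪WithLp.toLp 2 (β Y Y), WithLp.toLp 2 (β Y Y)⟫
        = ⟪WithLp.toLp 2 (β Y Y), WithLp.toLp 2 (β Z₀ T)⟫ := by rw [hT]
      _ = ⟪WithLp.toLp 2 (β Y Y), WithLp.toLp 2 (β T Z₀)⟫ := by
          simp only [WithLp.prod_inner_apply, hYY₂, inner_zero_left, h₁ Z₀ T]
      _ = 0 := by rw [hH, hYZ₀]; simp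
  rw [← WithLp.toLp_eq_zero 2, ← inner_self_eq_zero (𝕜 := ℝ), hH, hYY]
  simp

end Flat

theorem stmt_9_general
    {V U : Type*} [AddCommGroup V] [Module ℝ V] [FiniteDimensional ℝ V]
    [NormedAddCommGroup U] [InnerProductSpace ℝ U] [FiniteDimensional ℝ U]
    (n : ℕ) (hV : finrank ℝ V = 2 * n)
    (J : V →ₗ[ℝ] V)
    (α : V →ₗ[ℝ] V →ₗ[ℝ] U) (hα : ∀ X Y : V, α X Y = α Y X)
    (β : V →ₗ[ℝ] V →ₗ[ℝ] (U × U))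
    (hβ : ∀ X Y : V, β X Y = (α X Y + α (J X) (J Y), α X (J Y) - α (J X) Y))
    (hflat : ∀ X Y Z T : V,
      ⟪(β X Y).1, (β Z T).1⟫ - ⟪(β X Y).2, (β Z T).2⟫ =
        ⟪(β X T).1, (β Z Y).1⟫ - ⟪(β X T).2, (β Z Y).2⟫) :
    (∀ r₀ : ℕ,
      ((∃ Z : V, finrank ℝ ↥(LinearMap.range (β Z)) = r₀) ∧
        ∀ Z : V, finrank ℝ ↥(LinearMap.range (β Z)) ≤ r₀) →
      finrank ℝ ↥(⨅ X : V, LinearMap.ker (β X)) = 2 * n - r₀) ∧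
    2 * n - finrank ℝ ↥(Submodule.span ℝ {w : U × U | ∃ X Y : V, β X Y = w}) ≤
      finrank ℝ ↥(⨅ X : V, LinearMap.ker (β X)) := by
  have h₁ (X Y : V) : (β X Y).1 = (β Y X).1 := by simp only [hβ, hα X Y, hα (J X)]
  have h₂ (X Y : V) : (β X Y).2 = -(β Y X).2 := by simp only [hβ, hα X (J Y), hα (J X) Y, neg_sub]
  have nullity (Z₀ : V) (hmax : ∀ Z, finrank ℝ (LinearMap.range (β Z)) ≤
      finrank ℝ (LinearMap.range (β Z₀))) :
      finrank ℝ ↥(⨅ X : V, LinearMap.ker (β X)) = 2 * n - finrank ℝ (LinearMap.range (β Z₀)) := by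
    rw [iInf_ker_eq_ker_of_isFlat h₁ h₂ hflat hmax, ← hV,
      ← (β Z₀).finrank_range_add_finrank_ker]
    omega
  obtain ⟨_, ⟨Z₀, rfl⟩, hmax⟩ := BddAbove.exists_isGreatest_of_nonempty
    ⟨finrank ℝ (U × U), Set.forall_mem_range.2 fun Z => Submodule.finrank_le _⟩
    (Set.range_nonempty fun Z => finrank ℝ (LinearMap.range (β Z)))
  refine ⟨fun r₀ ⟨⟨Z, hZ⟩, hle⟩ => hZ ▸ nullity Z (hZ ▸ hle), ?_⟩
  rw [nullity Z₀ (Set.forall_mem_range.1 hmax)]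
  refine Nat.sub_le_sub_left (Submodule.finrank_mono ?_) _
  rintro _ ⟨Y, rfl⟩
  exact Submodule.subset_span ⟨Z₀, Y, rfl⟩

/-- If `β` is flat, `dim V = 2n`, `dim U = p ≤ n`, then `ν(β) = 2n - r₀` where `r₀`
is the maximal rank of the maps `B_Z = β(Z,·)`. In particular
`ν(β) ≥ 2n - dim S(β)`. -/
theorem stmt_9
    {V U : Type*} [AddCommGroup V] [Module ℝ V] [FiniteDimensional ℝ V]
    [NormedAddCommGroup U] [InnerProductSpace ℝ U] [FiniteDimensional ℝ U]
    (n p : ℕ) (hpn : p ≤ n) (hV : finrank ℝ V = 2 * n) (hU : finrank ℝ U = p)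
    (J : V →ₗ[ℝ] V) (hJ : ∀ v : V, J (J v) = -v)
    (α : V →ₗ[ℝ] V →ₗ[ℝ] U) (hα : ∀ X Y : V, α X Y = α Y X)
    (β : V →ₗ[ℝ] V →ₗ[ℝ] (U × U))
    (hβ : ∀ X Y : V, β X Y = (α X Y + α (J X) (J Y), α X (J Y) - α (J X) Y))
    (hflat : ∀ X Y Z T : V,
      ⟪(β X Y).1, (β Z T).1⟫ - ⟪(β X Y).2, (β Z T).2⟫ =
        ⟪(β X T).1, (β Z Y).1⟫ - ⟪(β X T).2, (β Z Y).2⟫) :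
    (∀ r₀ : ℕ,
      ((∃ Z : V, finrank ℝ ↥(LinearMap.range (β Z)) = r₀) ∧
        ∀ Z : V, finrank ℝ ↥(LinearMap.range (β Z)) ≤ r₀) →
      finrank ℝ ↥(⨅ X : V, LinearMap.ker (β X)) = 2 * n - r₀) ∧
    2 * n - finrank ℝ ↥(Submodule.span ℝ {w : U × U | ∃ X Y : V, β X Y = w}) ≤
      finrank ℝ ↥(⨅ X : V, LinearMap.ker (β X)) :=
  stmt_9_general n hV J α hα β hβ hflat
end

section
/- Let V have dimension 2p with p ≥ 2, let U have dimension p, let α : V × V → U be a symmetric bilinear map, and let β(X,Y) = (α(X,Y)+α(JX,JY), α(X,JY)-α(JX,Y)). Assume β is flat with respect to the signature-(p,p) bilinear form on U × U and that its kernel N(β) = {Y ∈ V : β(X,Y)=0 for all X} is zero. Then there exist non-zero vectors X, Y ∈ V with β(X,Y) = 0. -/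
open Module RealInnerProductSpace

namespace Stmt10Aux

variable {M : Type*} [AddCommGroup M] [Module ℝ M]

/-- A complex module structure from a real linear complex structure. -/
def complexModule (J : M →ₗ[ℝ] M) (hJ : ∀ v, J (J v) = -v) : Module ℂ M where
  smul z v := z.re • v + z.im • J v
  one_smul v := by
    show (1:ℂ).re • v + (1:ℂ).im • J v = v
    simp
  mul_smul x y v := by
    show (x*y).re • v + (x*y).im • J v
      = x.re • (y.re • v + y.im • J v) + x.im • J (y.re • v + y.im • J v)
    simp only [Complex.mul_re, Complex.mul_im, map_add, map_smul, hJ, smul_add,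
      smul_smul, sub_smul, add_smul, smul_neg]
    abel
  smul_zero z := by
    show z.re • (0:M) + z.im • J 0 = 0
    simp
  smul_add z v w := by
    show z.re • (v+w) + z.im • J (v+w)
      = (z.re • v + z.im • J v) + (z.re • w + z.im • J w)
    simp only [map_add, smul_add]
    abel
  add_smul x y v := by
    show (x+y).re • v + (x+y).im • J v
      = (x.re • v + x.im • J v) + (y.re • v + y.im • J v)
    simp only [Complex.add_re, Complex.add_im, add_smul]
    abel
  zero_smul v := by
    show (0:ℂ).re • v + (0:ℂ).im • J v = 0
    simp

theorem complexTower (J : M →ₗ[ℝ] M) (hJ : ∀ v, J (J v) = -v) :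
    letI := complexModule J hJ
    IsScalarTower ℝ ℂ M := by
  letI := complexModule J hJ
  refine ⟨fun r z v => ?_⟩
  show (r • z).re • v + (r • z).im • J v = r • (z.re • v + z.im • J v)
  rw [Complex.real_smul]
  simp only [Complex.mul_re, Complex.mul_im, Complex.ofReal_re, Complex.ofReal_im,
    zero_mul, sub_zero, zero_add, mul_zero, add_zero, smul_add, smul_smul]

end Stmt10Aux

set_option maxHeartbeats 1000000 in
/-- (Fact 1) If `dim V = 2p`, `p ≥ 2`, `β` is flat and `N(β) = 0`, then there exist
nonzero vectors `X, Y` with `β(X,Y) = 0`. -/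
theorem stmt_10
    {V U : Type*} [AddCommGroup V] [Module ℝ V] [FiniteDimensional ℝ V]
    [NormedAddCommGroup U] [InnerProductSpace ℝ U] [FiniteDimensional ℝ U]
    (p : ℕ) (hp : 2 ≤ p) (hV : finrank ℝ V = 2 * p) (hU : finrank ℝ U = p)
    (J : V →ₗ[ℝ] V) (hJ : ∀ v : V, J (J v) = -v)
    (α : V →ₗ[ℝ] V →ₗ[ℝ] U) (hα : ∀ X Y : V, α X Y = α Y X)
    (β : V →ₗ[ℝ] V →ₗ[ℝ] (U × U))
    (hβ : ∀ X Y : V, β X Y = (α X Y + α (J X) (J Y), α X (J Y) - α (J X) Y))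
    (hflat : ∀ X Y Z T : V,
      ⟪(β X Y).1, (β Z T).1⟫ - ⟪(β X Y).2, (β Z T).2⟫ =
        ⟪(β X T).1, (β Z Y).1⟫ - ⟪(β X T).2, (β Z Y).2⟫)
    (hker : (⨅ X : V, LinearMap.ker (β X)) = ⊥) :
    ∃ X Y : V, X ≠ 0 ∧ Y ≠ 0 ∧ β X Y = 0 := by
  classical
  by_contra hcon
  push_neg at hcon
  -- hcon : ∀ X Y, X ≠ 0 → Y ≠ 0 → β X Y ≠ 0
  -- complex structures
  letI instV : Module ℂ V := Stmt10Aux.complexModule J hJ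
  letI : IsScalarTower ℝ ℂ V := Stmt10Aux.complexTower J hJ
  set ρ : (U × U) →ₗ[ℝ] (U × U) :=
    { toFun := fun w => (-w.2, w.1)
      map_add' := by intro a b; simp [Prod.ext_iff]; abel
      map_smul' := by intro r a; simp [Prod.ext_iff] } with hρdef
  have hρ : ∀ w : U × U, ρ (ρ w) = -w := by intro w; simp [hρdef, Prod.ext_iff]
  letI instW : Module ℂ (U × U) := Stmt10Aux.complexModule ρ hρ
  letI : IsScalarTower ℝ ℂ (U × U) := Stmt10Aux.complexTower ρ hρ
  haveI : FiniteDimensional ℂ V := Module.Finite.of_restrictScalars_finite ℝ ℂ V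
  haveI : FiniteDimensional ℂ (U × U) := Module.Finite.of_restrictScalars_finite ℝ ℂ (U × U)
  haveI : Nontrivial V := by
    have : 0 < finrank ℝ V := by omega
    exact Module.nontrivial_of_finrank_pos this
  -- dimensions
  have hrV : finrank ℂ V = p := by
    have h := Module.finrank_mul_finrank ℝ ℂ V
    rw [Complex.finrank_real_complex, hV] at h
    omega
  have hrW : finrank ℂ (U × U) = p := by
    have h := Module.finrank_mul_finrank ℝ ℂ (U × U)
    have h2 : finrank ℝ (U × U) = 2 * p := by
      rw [Module.finrank_prod, hU]; omega
    rw [Complex.finrank_real_complex, h2] at h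
    omega
  -- smul descriptions
  have hsmulV : ∀ (z : ℂ) (Y : V), z • Y = z.re • Y + z.im • J Y := fun _ _ => rfl
  have hsmulW : ∀ (z : ℂ) (w : U × U),
      z • w = (z.re • w.1 - z.im • w.2, z.im • w.1 + z.re • w.2) := by
    intro z w
    show z.re • w + z.im • ρ w = _
    have hrw : ρ w = (-w.2, w.1) := rfl
    rw [hrw]
    refine Prod.ext ?_ ?_ <;> simp [smul_neg, sub_eq_add_neg] <;> abel
  -- behaviour of β under J
  have hβJ₂ : ∀ X Y : V, β X (J Y) = ((β X Y).2, -(β X Y).1) := by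
    intro X Y
    rw [hβ, hβ]
    simp only [hJ, map_neg, LinearMap.neg_apply, Prod.mk.injEq]
    constructor <;> abel
  have hβJ₁ : ∀ X Y : V, β (J X) Y = (-(β X Y).2, (β X Y).1) := by
    intro X Y
    rw [hβ, hβ]
    simp only [hJ, map_neg, LinearMap.neg_apply, Prod.mk.injEq]
    constructor <;> abel
  -- the complex-linear maps L X
  set L : V → (V →ₗ[ℂ] (U × U)) := fun X =>
    { toFun := fun Y => ((β X Y).1, -(β X Y).2)
      map_add' := by intro a b; simp [Prod.ext_iff]; abel
      map_smul' := by
        intro z Y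
        rw [hsmulV]
        simp only [map_add, map_smul, hβJ₂, RingHom.id_apply, hsmulW]
        simp only [Prod.fst_add, Prod.snd_add, Prod.smul_fst, Prod.smul_snd,
          Prod.ext_iff, smul_neg]
        constructor <;> abel } with hLdef
  have hLapp : ∀ X Y, L X Y = ((β X Y).1, -(β X Y).2) := fun _ _ => rfl
  have hLinj : ∀ X : V, X ≠ 0 → Function.Injective (L X) := by
    intro X hX
    rw [← LinearMap.ker_eq_bot, eq_bot_iff]
    intro Y hY
    simp only [LinearMap.mem_ker, hLapp, Prod.ext_iff, neg_eq_zero, Prod.fst_zero,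
      Prod.snd_zero] at hY
    by_contra hY0
    simp only [Submodule.mem_bot] at hY0
    exact hcon X Y hX hY0 (Prod.ext hY.1 hY.2)
  -- two independent vectors
  obtain ⟨b⟩ : Nonempty (Basis (Fin p) ℂ V) := ⟨Module.finBasisOfFinrankEq ℂ V hrV⟩
  have hi : (⟨0, by omega⟩ : Fin p) ≠ ⟨1, by omega⟩ := by simp [Fin.ext_iff]
  set X₁ : V := b ⟨0, by omega⟩ with hX₁
  set X₂ : V := b ⟨1, by omega⟩ with hX₂
  have hX₁0 : X₁ ≠ 0 := b.ne_zero _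
  have hind : ∀ c : ℂ, X₂ - c • X₁ ≠ 0 := by
    intro c hc
    have := congrArg (fun v => b.repr v ⟨1, by omega⟩) hc
    simp only [map_sub, map_smul, hX₁, hX₂, b.repr_self, Finsupp.sub_apply,
      Finsupp.smul_apply, Finsupp.single_apply, hi, if_neg (Ne.symm hi)] at this
    simp at this
  -- L X₁ is bijective
  have hbij : Function.Bijective (L X₁) := by
    have hinj := hLinj X₁ hX₁0
    refine ⟨hinj, ?_⟩
    exact (LinearMap.injective_iff_surjective_of_finrank_eq_finrank
      (by rw [hrV, hrW])).mp hinj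
  set e : V ≃ₗ[ℂ] (U × U) := LinearEquiv.ofBijective (L X₁) hbij with hedef
  -- eigenvalue argument
  set T : Module.End ℂ V := (e.symm : (U × U) →ₗ[ℂ] V) ∘ₗ L X₂ with hTdef
  obtain ⟨μ, hμ⟩ := Module.End.exists_eigenvalue T
  obtain ⟨Y, hY⟩ := hμ.exists_hasEigenvector
  have hY0 : Y ≠ 0 := hY.2
  have hTY : T Y = μ • Y := hY.apply_eq_smul
  have hkey : L X₂ Y = μ • L X₁ Y := by
    have h1 : e.symm (L X₂ Y) = μ • Y := hTY
    have h2 : L X₂ Y = e (μ • Y) := by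
      rw [← h1, LinearEquiv.apply_symm_apply]
    rw [h2, map_smul]
    rfl
  -- build the zero of β
  set X : V := X₂ - (starRingEnd ℂ μ) • X₁ with hXdef
  have hX0 : X ≠ 0 := hind _
  refine hcon X Y hX0 hY0 ?_
  -- expand
  have hconj : (starRingEnd ℂ μ) • X₁ = μ.re • X₁ - μ.im • J X₁ := by
    rw [hsmulV]
    simp [sub_eq_add_neg]
  have hexp : β X Y = β X₂ Y - μ.re • β X₁ Y + μ.im • β (J X₁) Y := by
    rw [hXdef, hconj]
    simp only [map_sub, map_smul, LinearMap.sub_apply, LinearMap.smul_apply]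
    abel
  have hcomp := hkey
  rw [hLapp, hLapp, hsmulW] at hcomp
  simp only [Prod.ext_iff] at hcomp
  obtain ⟨hc1, hc2⟩ := hcomp
  -- hc1 : (β X₂ Y).1 = μ.re • (β X₁ Y).1 - μ.im • (-(β X₁ Y).2)
  -- hc2 : -(β X₂ Y).2 = μ.im • (β X₁ Y).1 + μ.re • (-(β X₁ Y).2)
  rw [hexp, hβJ₁]
  have hc2' : (β X₂ Y).2 = μ.re • (β X₁ Y).2 - μ.im • (β X₁ Y).1 := by
    have := congrArg Neg.neg hc2
    simp only [neg_neg, neg_add, neg_smul, smul_neg] at this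
    rw [this]; abel
  refine Prod.ext ?_ ?_
  · simp only [Prod.fst_add, Prod.fst_sub, Prod.smul_fst, Prod.fst_zero]
    rw [hc1]
    simp only [smul_neg]
    abel
  · simp only [Prod.snd_add, Prod.snd_sub, Prod.smul_snd, Prod.snd_zero]
    rw [hc2']
    abel
end

section
/- Let V have dimension 2p with p ≥ 1, let U have dimension p, let α : V × V → U be a symmetric bilinear map, and let β(X,Y) = (α(X,Y)+α(JX,JY), α(X,JY)-α(JX,Y)). Assume β is flat with respect to the signature-(p,p) bilinear form on U × U and that its kernel N(β) = {Y ∈ V : β(X,Y)=0 for all X} is zero. Then there exists Z₀ ∈ V such that the kernel of the linear map B_{Z₀} : V → U × U, B_{Z₀}Y = β(Z₀,Y), has dimension exactly 2(p-1). -/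
/-!
View `β` as a map `G` into `U × U` with the positive definite product inner product. Since `α` is
symmetric, `β Y X` is the conjugate `(a, -b)` of `β X Y = (a, b)`, and flatness of `β` turns into
`⟪G X Y, G Z T⟫ = ⟪G X Z, G Y T⟫`. Hence `G X Y = 0` iff `⟪G X X, G Y Y⟫ = 0`, in which case the
images of `G X` and `G Y` are orthogonal, and `N(β) = 0` gives `G Y Y ≠ 0` for `Y ≠ 0`.

Take a largest set `S` of nonzero vectors with `G v w = 0` for `v ≠ w`. The images of the `G v`,
`v ∈ S`, are orthogonal and, by maximality, the kernels meet in `0`; so the ranks add up to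
`dim V = dim (U × U)`. Fix `v ∈ S`, let `V₁` be the common kernel of the other `G w` and `W₁` the
orthogonal complement of their images. Counting gives `dim W₁ ≤ rank (G v) ≤ dim V₁`, and
`G (V₁ × V₁) ⊆ W₁`. Maximality again shows that `G` has no zero divisors on `V₁`; in particular
`G v` is injective on `V₁`, so `rank (G v) = dim V₁`.

Finally `V₁` is `J`-invariant and `G (J X) Y = -j (G X Y)`, `G X (J Y) = j (G X Y)` for the
rotation `j (a, b) = (b, -a)`. On the complex vector space `(V₁, J)`, if `y₀ ≠ 0` then
`G (·, y₀)⁻¹ ∘ G (·, y)` is complex linear, and an eigenvector `x` with eigenvalue `μ` gives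
`G (x, y - μ̄ y₀) = 0`. So `V₁` is a complex line, `rank (G v) = 2` and `dim ker (β v) = 2p - 2`.
-/

open Module Submodule LinearMap RealInnerProductSpace
open Complex (I)

theorem finrank_le_finrank_finsetInf_ker_add_sum {K V E ι : Type*} [Field K]
    [AddCommGroup V] [Module K V] [FiniteDimensional K V] [AddCommGroup E] [Module K E]
    (s : Finset ι) (f : ι → V →ₗ[K] E) :
    finrank K V ≤
      finrank K ↥(s.inf fun i => ker (f i)) + ∑ i ∈ s, finrank K (range (f i)) := by
  let g : V →ₗ[K] ((i : s) → range (f i)) := LinearMap.pi fun i => (f i).rangeRestrict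
  have hker : ker g = s.inf fun i => ker (f i) := by
    ext x
    simp [g, ker_pi, mem_iInf, mem_finsetInf]
  have hrange : finrank K (range g) ≤ ∑ i ∈ s, finrank K (range (f i)) := by
    rw [← Finset.sum_coe_sort s, ← Module.finrank_pi_fintype]
    exact Submodule.finrank_le (range g)
  have := g.finrank_range_add_finrank_ker
  rw [hker] at this
  omega

theorem finrank_finsetSup_eq_sum_of_pairwise_isOrtho {E ι : Type*} [NormedAddCommGroup E]
    [InnerProductSpace ℝ E] [FiniteDimensional ℝ E] (s : Finset ι) (R : ι → Submodule ℝ E)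
    (hR : (s : Set ι).Pairwise fun i j => R i ⟂ R j) :
    finrank ℝ ↥(s.sup R) = ∑ i ∈ s, finrank ℝ (R i) := by
  classical
  induction s using Finset.induction_on with
  | empty => simp
  | @insert a s ha ih =>
    rw [Finset.coe_insert] at hR
    have hdisj : R a ⊓ s.sup R = ⊥ := by
      refine (R a).orthogonal_disjoint.mono_right (Finset.sup_le fun i hi => ?_) |>.eq_bot
      have hai : a ≠ i := by rintro rfl; exact ha hi
      exact (hR (Set.mem_insert a s) (Set.mem_insert_of_mem a hi) hai).symm
    have := Submodule.finrank_sup_add_finrank_inf_eq (R a) (s.sup R)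
    rw [Finset.sup_insert, Finset.sum_insert ha, ← ih (hR.mono (Set.subset_insert _ _))]
    rw [hdisj, finrank_bot] at this
    omega

theorem exists_module_complex_of_sq_eq_neg_one {M : Type*} [AddCommGroup M] [Module ℝ M]
    (J : M →ₗ[ℝ] M) (hJ : ∀ x, J (J x) = -x) :
    ∃ _ : Module ℂ M, IsScalarTower ℝ ℂ M ∧ ∀ x : M, I • x = J x := by
  have hJJ : J * J = -1 := LinearMap.ext hJ
  let _ : Module ℂ M := Module.compHom M (Complex.liftAux J hJJ).toRingHom
  refine ⟨‹_›, ⟨fun r z x => ?_⟩, fun x => ?_⟩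
  · show Complex.liftAux J hJJ (r • z) x = r • Complex.liftAux J hJJ z x
    rw [map_smul]
    rfl
  · show Complex.liftAux J hJJ I x = J x
    rw [Complex.liftAux_apply_I]

section ComplexVectorSpace

variable {M E : Type*} [AddCommGroup M] [Module ℂ M] [Module ℝ M] [IsScalarTower ℝ ℂ M]
  [AddCommGroup E] [Module ℝ E]

theorem Complex.smul_eq_re_smul_add_im_smul_I_smul (z : ℂ) (x : M) :
    z • x = z.re • x + z.im • (I • x) := by
  conv_lhs => rw [← Complex.re_add_im z]
  rw [add_smul, mul_smul, ← Complex.coe_algebraMap, algebraMap_smul, algebraMap_smul]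

theorem exists_end_complex_comp_eq (K : E →ₗ[ℝ] E) {B C : M →ₗ[ℝ] E}
    (hB : Function.Injective B)
    (hBI : ∀ x, B (I • x) = -K (B x)) (hCI : ∀ x, C (I • x) = -K (C x))
    (hCB : range C ≤ range B) : ∃ T : Module.End ℂ M, ∀ x, B (T x) = C x := by
  let T₀ : M →ₗ[ℝ] M := (LinearEquiv.ofInjective B hB).symm.toLinearMap ∘ₗ
    C.codRestrict (range B) (fun x => hCB (mem_range_self C x))
  have hT₀ : ∀ x, B (T₀ x) = C x := fun x =>
    congrArg Subtype.val ((LinearEquiv.ofInjective B hB).apply_symm_apply _)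
  have hT₀I : ∀ x, T₀ (I • x) = I • T₀ x := fun x => hB (by
    rw [hT₀, hCI, hBI, hT₀])
  refine ⟨{ toFun := T₀, map_add' := map_add T₀, map_smul' := fun z x => ?_ }, hT₀⟩
  simp only [Complex.smul_eq_re_smul_add_im_smul_I_smul z, map_add, map_smul, hT₀I,
    RingHom.id_apply]

variable [FiniteDimensional ℝ M]

theorem exists_smul_eq_of_nonsingular [FiniteDimensional ℝ E] (K : E →ₗ[ℝ] E)
    (F : M →ₗ[ℝ] M →ₗ[ℝ] E) (hleft : ∀ x y, F (I • x) y = -K (F x y))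
    (hright : ∀ x y, F x (I • y) = K (F x y)) (hF : ∀ x y, F x y = 0 → x = 0 ∨ y = 0)
    (Q : Submodule ℝ E) (hQ : ∀ x y, F x y ∈ Q) (hdim : finrank ℝ Q ≤ finrank ℝ M) {y₀ : M}
    (hy₀ : y₀ ≠ 0) (y : M) : ∃ c : ℂ, c • y₀ = y := by
  have : Module.Finite ℂ M := Module.Finite.of_restrictScalars_finite ℝ ℂ M
  have : Nontrivial M := ⟨⟨y₀, 0, hy₀⟩⟩
  have hB : Function.Injective (F.flip y₀) := by
    rw [← ker_eq_bot, Submodule.eq_bot_iff]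
    exact fun x hx => (hF x y₀ hx).resolve_right hy₀
  have hBQ : range (F.flip y₀) = Q := by
    refine Submodule.eq_of_le_of_finrank_le ?_ ?_
    · rintro _ ⟨x, rfl⟩
      exact hQ x y₀
    · rwa [finrank_range_of_inj hB]
  have hI : ∀ y' x, F.flip y' (I • x) = -K (F.flip y' x) := fun y' x => hleft x y'
  obtain ⟨T, hT⟩ := exists_end_complex_comp_eq K hB (hI y₀) (hI y)
    (by rw [hBQ]; rintro _ ⟨x, rfl⟩; exact hQ x y)
  obtain ⟨μ, hμ⟩ := Module.End.exists_eigenvalue T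
  obtain ⟨x, hx⟩ := hμ.exists_hasEigenvector
  -- `F x y = F (μ • x) y₀ = F x (conj μ • y₀)`, so `y = conj μ • y₀` by nonsingularity
  have hxy : F x (y - starRingEnd ℂ μ • y₀) = 0 := by
    have hTx := hT x
    rw [flip_apply, flip_apply, hx.apply_eq_smul, Complex.smul_eq_re_smul_add_im_smul_I_smul,
      map_add, map_smul, map_smul, LinearMap.add_apply, LinearMap.smul_apply,
      LinearMap.smul_apply, hleft] at hTx
    rw [map_sub, ← hTx, Complex.smul_eq_re_smul_add_im_smul_I_smul, map_add, map_smul, map_smul,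
      hright, Complex.conj_re, Complex.conj_im]
    module
  exact ⟨starRingEnd ℂ μ, (sub_eq_zero.mp ((hF x _ hxy).resolve_left hx.2)).symm⟩

theorem finrank_eq_two_of_nonsingular [Nontrivial M] [FiniteDimensional ℝ E] (K : E →ₗ[ℝ] E)
    (F : M →ₗ[ℝ] M →ₗ[ℝ] E) (hleft : ∀ x y, F (I • x) y = -K (F x y))
    (hright : ∀ x y, F x (I • y) = K (F x y)) (hF : ∀ x y, F x y = 0 → x = 0 ∨ y = 0)
    (Q : Submodule ℝ E) (hQ : ∀ x y, F x y ∈ Q) (hdim : finrank ℝ Q ≤ finrank ℝ M) :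
    finrank ℝ M = 2 := by
  have : Module.Finite ℂ M := Module.Finite.of_restrictScalars_finite ℝ ℂ M
  obtain ⟨y₀, hy₀⟩ := exists_ne (0 : M)
  have h1 :=
    finrank_le_one y₀ (exists_smul_eq_of_nonsingular K F hleft hright hF Q hQ hdim hy₀)
  have h2 := Module.finrank_mul_finrank ℝ ℂ M
  have h3 : 0 < finrank ℂ M := finrank_pos
  rw [Complex.finrank_real_complex] at h2
  omega

end ComplexVectorSpace

namespace LinearMap

variable {V E : Type*} [AddCommGroup V] [Module ℝ V] [NormedAddCommGroup E]
  [InnerProductSpace ℝ E] {G : V →ₗ[ℝ] V →ₗ[ℝ] E}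

def IsInnerFlat (G : V →ₗ[ℝ] V →ₗ[ℝ] E) : Prop :=
  ∀ X Y Z T, ⟪G X Y, G Z T⟫ = ⟪G X Z, G Y T⟫

namespace IsInnerFlat

theorem apply_eq_zero_iff (hG : G.IsInnerFlat) {X Y : V} :
    G X Y = 0 ↔ ⟪G X X, G Y Y⟫ = 0 := by
  rw [← hG X Y X Y, inner_self_eq_zero]

theorem isRefl (hG : G.IsInnerFlat) : G.IsRefl := fun X Y h => by
  rwa [hG.apply_eq_zero_iff, real_inner_comm, ← hG.apply_eq_zero_iff]

theorem range_isOrtho (hG : G.IsInnerFlat) {v w : V} (h : G v w = 0) :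
    range (G v) ⟂ range (G w) := by
  rw [isOrtho_iff_inner_eq]
  rintro _ ⟨Y, rfl⟩ _ ⟨T, rfl⟩
  rw [hG, h, inner_zero_left]

theorem eq_zero_of_apply_self_eq_zero (hG : G.IsInnerFlat) (hker : ⨅ X, ker (G X) = ⊥) {Y : V}
    (h : G Y Y = 0) : Y = 0 := by
  rw [← Submodule.mem_bot ℝ, ← hker, mem_iInf]
  intro X
  rw [mem_ker, hG.apply_eq_zero_iff, h, inner_zero_right]

theorem range_le_orthogonal_of_mem_finsetInf_ker (hG : G.IsInnerFlat) (T : Finset V) {y : V}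
    (hy : y ∈ T.inf fun w => ker (G w)) :
    range (G y) ≤ (T.sup fun w => range (G w))ᗮ := by
  refine IsOrtho.ge (isOrtho_iff_le.mpr (Finset.sup_le fun w hw => ?_))
  exact (hG.range_isOrtho (mem_finsetInf.mp hy w hw)).le

end IsInnerFlat

theorem card_insert_of_forall_apply_eq_zero [DecidableEq V] (hdiag : ∀ Y, G Y Y = 0 → Y = 0)
    {S : Finset V} {w : V} (hw0 : w ≠ 0) (hw : ∀ v ∈ S, G v w = 0) :
    (insert w S).card = S.card + 1 :=
  Finset.card_insert_of_notMem fun hwS => hw0 (hdiag w (hw w hwS))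

def IsOrthSystem (G : V →ₗ[ℝ] V →ₗ[ℝ] E) (S : Finset V) : Prop :=
  0 ∉ S ∧ (S : Set V).Pairwise fun v w => G v w = 0

def IsMaxOrthSystem (G : V →ₗ[ℝ] V →ₗ[ℝ] E) (S : Finset V) : Prop :=
  G.IsOrthSystem S ∧ ∀ T, G.IsOrthSystem T → T.card ≤ S.card

namespace IsOrthSystem

variable {S : Finset V}

theorem subset {T : Finset V} (hS : G.IsOrthSystem S) (hT : T ⊆ S) : G.IsOrthSystem T :=
  ⟨fun h => hS.1 (hT h), hS.2.mono (Finset.coe_subset.mpr hT)⟩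

theorem insert_of_forall_apply_eq_zero [DecidableEq V] (hG : G.IsInnerFlat)
    (hS : G.IsOrthSystem S) {w : V} (hw0 : w ≠ 0) (hw : ∀ v ∈ S, G v w = 0) :
    G.IsOrthSystem (insert w S) := by
  refine ⟨fun h => ?_, ?_⟩
  · rcases Finset.mem_insert.mp h with h | h
    exacts [hw0 h.symm, hS.1 h]
  · rw [Finset.coe_insert, Set.pairwise_insert]
    exact ⟨hS.2, fun v hv _ => ⟨hG.isRefl _ _ (hw v hv), hw v hv⟩⟩

theorem finrank_finsetSup_range_eq_sum [FiniteDimensional ℝ E] (hG : G.IsInnerFlat)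
    (hS : G.IsOrthSystem S) :
    finrank ℝ ↥(S.sup fun v => range (G v)) = ∑ v ∈ S, finrank ℝ (range (G v)) :=
  finrank_finsetSup_eq_sum_of_pairwise_isOrtho S _ (hS.2.imp fun _ _ => hG.range_isOrtho)

theorem card_le [FiniteDimensional ℝ E] (hG : G.IsInnerFlat) (hdiag : ∀ Y, G Y Y = 0 → Y = 0)
    (hS : G.IsOrthSystem S) : S.card ≤ finrank ℝ E := by
  calc S.card = ∑ _v ∈ S, 1 := Finset.card_eq_sum_ones S
    _ ≤ ∑ v ∈ S, finrank ℝ (range (G v)) := by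
      refine Finset.sum_le_sum fun v hv => one_le_finrank_iff.mpr ?_
      refine (Submodule.ne_bot_iff _).mpr ⟨G v v, mem_range_self _ _, fun h => ?_⟩
      exact hS.1 (hdiag v h ▸ hv)
    _ = finrank ℝ ↥(S.sup fun v => range (G v)) := (hS.finrank_finsetSup_range_eq_sum hG).symm
    _ ≤ finrank ℝ E := Submodule.finrank_le _

end IsOrthSystem

theorem IsInnerFlat.exists_isMaxOrthSystem [FiniteDimensional ℝ E] (hG : G.IsInnerFlat)
    (hdiag : ∀ Y, G Y Y = 0 → Y = 0) : ∃ S, G.IsMaxOrthSystem S := by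
  let N := {n | ∃ S, G.IsOrthSystem S ∧ S.card = n}
  have hN : BddAbove N := ⟨finrank ℝ E, by rintro _ ⟨S, hS, rfl⟩; exact hS.card_le hG hdiag⟩
  have hN₀ : N.Nonempty := ⟨0, ∅, ⟨by simp, by simp⟩, rfl⟩
  obtain ⟨S, hS, hcard⟩ := Nat.sSup_mem hN₀ hN
  exact ⟨S, hS, fun T hT => hcard ▸ le_csSup hN ⟨T, hT, rfl⟩⟩

namespace IsMaxOrthSystem

variable [DecidableEq V] {S : Finset V}

theorem finsetInf_ker_eq_bot (hG : G.IsInnerFlat) (hdiag : ∀ Y, G Y Y = 0 → Y = 0)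
    (hS : G.IsMaxOrthSystem S) : (S.inf fun v => ker (G v)) = ⊥ := by
  refine (Submodule.eq_bot_iff _).mpr fun w hw => by_contra fun hw0 => ?_
  have hwS : ∀ v ∈ S, G v w = 0 := fun v hv => mem_finsetInf.mp hw v hv
  have := hS.2 _ (hS.1.insert_of_forall_apply_eq_zero hG hw0 hwS)
  rw [card_insert_of_forall_apply_eq_zero hdiag hw0 hwS] at this
  omega

theorem eq_zero_or_eq_zero_of_mem_finsetInf_ker_erase (hG : G.IsInnerFlat)
    (hdiag : ∀ Y, G Y Y = 0 → Y = 0) (hS : G.IsMaxOrthSystem S) {v : V} (hv : v ∈ S) :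
    ∀ x ∈ (S.erase v).inf fun w => ker (G w), ∀ y ∈ (S.erase v).inf fun w => ker (G w),
      G x y = 0 → x = 0 ∨ y = 0 := by
  intro x hx y hy hxy
  by_contra! h
  have hyT : ∀ w ∈ S.erase v, G w y = 0 := fun w hw => mem_finsetInf.mp hy w hw
  have hxT : ∀ w ∈ insert y (S.erase v), G w x = 0 := by
    intro w hw
    rcases Finset.mem_insert.mp hw with rfl | hw
    exacts [hG.isRefl _ _ hxy, mem_finsetInf.mp hx w hw]
  have hT := (hS.1.subset (S.erase_subset v)).insert_of_forall_apply_eq_zero hG h.2 hyT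
  have := hS.2 _ (hT.insert_of_forall_apply_eq_zero hG h.1 hxT)
  rw [card_insert_of_forall_apply_eq_zero hdiag h.1 hxT,
    card_insert_of_forall_apply_eq_zero hdiag h.2 hyT, Finset.card_erase_of_mem hv] at this
  have := Finset.card_pos.mpr ⟨v, hv⟩
  omega

variable [FiniteDimensional ℝ V] [FiniteDimensional ℝ E]

theorem sum_finrank_range_eq (hG : G.IsInnerFlat) (hdiag : ∀ Y, G Y Y = 0 → Y = 0)
    (hS : G.IsMaxOrthSystem S) (hdim : finrank ℝ E ≤ finrank ℝ V) :
    ∑ v ∈ S, finrank ℝ (range (G v)) = finrank ℝ V := by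
  have h1 := finrank_le_finrank_finsetInf_ker_add_sum S G
  rw [hS.finsetInf_ker_eq_bot hG hdiag, finrank_bot, zero_add] at h1
  have h2 := hS.1.finrank_finsetSup_range_eq_sum hG ▸ Submodule.finrank_le _
  omega

theorem finrank_range_le_finrank_finsetInf_ker_erase (hG : G.IsInnerFlat)
    (hdiag : ∀ Y, G Y Y = 0 → Y = 0) (hS : G.IsMaxOrthSystem S)
    (hdim : finrank ℝ E ≤ finrank ℝ V) {v : V} (hv : v ∈ S) :
    finrank ℝ (range (G v)) ≤ finrank ℝ ↥((S.erase v).inf fun w => ker (G w)) := by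
  have h1 := finrank_le_finrank_finsetInf_ker_add_sum (S.erase v) G
  have h2 := Finset.add_sum_erase S (fun w => finrank ℝ (range (G w))) hv
  have h3 := hS.sum_finrank_range_eq hG hdiag hdim
  omega

theorem finrank_orthogonal_finsetSup_range_erase_le (hG : G.IsInnerFlat)
    (hdiag : ∀ Y, G Y Y = 0 → Y = 0) (hS : G.IsMaxOrthSystem S)
    (hdim : finrank ℝ E ≤ finrank ℝ V) {v : V} (hv : v ∈ S) :
    finrank ℝ ↥((S.erase v).sup fun w => range (G w))ᗮ ≤ finrank ℝ (range (G v)) := by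
  have h1 := ((S.erase v).sup fun w => range (G w)).finrank_add_finrank_orthogonal
  rw [(hS.1.subset (S.erase_subset v)).finrank_finsetSup_range_eq_sum hG] at h1
  have h2 := Finset.add_sum_erase S (fun w => finrank ℝ (range (G w))) hv
  have h3 := hS.sum_finrank_range_eq hG hdiag hdim
  omega

end IsMaxOrthSystem

theorem IsInnerFlat.exists_finrank_range_eq_two [FiniteDimensional ℝ V] [Nontrivial V]
    [FiniteDimensional ℝ E] (hG : G.IsInnerFlat) (hdiag : ∀ Y, G Y Y = 0 → Y = 0)
    (J : V →ₗ[ℝ] V) (hJ : ∀ v, J (J v) = -v) (K : E →ₗ[ℝ] E)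
    (hleft : ∀ X Y, G (J X) Y = -K (G X Y)) (hright : ∀ X Y, G X (J Y) = K (G X Y))
    (hdim : finrank ℝ E ≤ finrank ℝ V) :
    ∃ v, finrank ℝ (range (G v)) = 2 := by
  classical
  obtain ⟨S, hS⟩ := hG.exists_isMaxOrthSystem hdiag
  obtain ⟨v, hv⟩ : S.Nonempty := by
    rw [Finset.nonempty_iff_ne_empty]
    rintro rfl
    exact top_ne_bot (hS.finsetInf_ker_eq_bot hG hdiag)
  set V₁ := (S.erase v).inf fun w => ker (G w)
  have hv0 : v ≠ 0 := fun h => hS.1.1 (h ▸ hv)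
  have hvV₁ : v ∈ V₁ := mem_finsetInf.mpr fun w hw =>
    hS.1.2 (Finset.mem_of_mem_erase hw) hv (Finset.ne_of_mem_erase hw)
  have hnonsing := hS.eq_zero_or_eq_zero_of_mem_finsetInf_ker_erase hG hdiag hv
  have hinj : Function.Injective ((G v).domRestrict V₁) := by
    rw [← ker_eq_bot, Submodule.eq_bot_iff]
    exact fun y hy => Subtype.ext ((hnonsing v hvV₁ y y.2 hy).resolve_left hv0)
  have hV₁le : finrank ℝ V₁ ≤ finrank ℝ (range (G v)) :=
    finrank_range_of_inj hinj ▸ Submodule.finrank_mono (range_domRestrict_le_range _ _)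
  have hJV₁ : ∀ y ∈ V₁, J y ∈ V₁ := fun y hy => mem_finsetInf.mpr fun w hw => by
    rw [mem_ker, hright, mem_finsetInf.mp hy w hw, map_zero]
  obtain ⟨_, _, hI⟩ := exists_module_complex_of_sq_eq_neg_one (J.restrict hJV₁)
    fun x => Subtype.ext (hJ x)
  have : Nontrivial V₁ := ⟨⟨v, hvV₁⟩, 0, by simpa using hv0⟩
  have hV₁two : finrank ℝ V₁ = 2 := by
    refine finrank_eq_two_of_nonsingular K (G.domRestrict₁₂ V₁ V₁)
      (fun x y => by simp only [hI, domRestrict₁₂_apply, coe_restrict_apply, hleft])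
      (fun x y => by simp only [hI, domRestrict₁₂_apply, coe_restrict_apply, hright])
      (fun x y hxy => (hnonsing x x.2 y y.2 hxy).imp Subtype.ext Subtype.ext) _
      (fun x y => hG.range_le_orthogonal_of_mem_finsetInf_ker _ x.2 (mem_range_self _ _)) ?_
    exact (hS.finrank_orthogonal_finsetSup_range_erase_le hG hdiag hdim hv).trans
      (hS.finrank_range_le_finrank_finsetInf_ker_erase hG hdiag hdim hv)
  exact ⟨v, le_antisymm
    ((hS.finrank_range_le_finrank_finsetInf_ker_erase hG hdiag hdim hv).trans hV₁two.le)
    (hV₁two ▸ hV₁le)⟩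

end LinearMap

section WithLp2

variable {V U : Type*} [AddCommGroup V] [Module ℝ V] [NormedAddCommGroup U] [InnerProductSpace ℝ U]

noncomputable def toWithLp2 (β : V →ₗ[ℝ] V →ₗ[ℝ] (U × U)) :
    V →ₗ[ℝ] V →ₗ[ℝ] WithLp 2 (U × U) :=
  β.compr₂ (WithLp.linearEquiv 2 ℝ (U × U)).symm.toLinearMap

noncomputable def rotateL2 : WithLp 2 (U × U) →ₗ[ℝ] WithLp 2 (U × U) :=
  (WithLp.linearEquiv 2 ℝ (U × U)).symm.conj ((LinearMap.snd ℝ U U).prod (-LinearMap.fst ℝ U U))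

theorem toWithLp2_apply (β : V →ₗ[ℝ] V →ₗ[ℝ] (U × U)) (X Y : V) :
    toWithLp2 β X Y = WithLp.toLp 2 (β X Y) :=
  rfl

theorem rotateL2_toLp (x : U × U) : rotateL2 (WithLp.toLp 2 x) = WithLp.toLp 2 (x.2, -x.1) :=
  rfl

variable {J : V →ₗ[ℝ] V} {α : V →ₗ[ℝ] V →ₗ[ℝ] U} {β : V →ₗ[ℝ] V →ₗ[ℝ] (U × U)}

theorem ker_toWithLp2 (X : V) : ker (toWithLp2 β X) = ker (β X) :=
  LinearEquiv.ker_comp _ _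

theorem isInnerFlat_toWithLp2 (hα : ∀ X Y : V, α X Y = α Y X)
    (hβ : ∀ X Y : V, β X Y = (α X Y + α (J X) (J Y), α X (J Y) - α (J X) Y))
    (hflat : ∀ X Y Z T : V,
      ⟪(β X Y).1, (β Z T).1⟫ - ⟪(β X Y).2, (β Z T).2⟫ =
        ⟪(β X T).1, (β Z Y).1⟫ - ⟪(β X T).2, (β Z Y).2⟫) :
    (toWithLp2 β).IsInnerFlat := by
  have hfst : ∀ X Y, (β Y X).1 = (β X Y).1 := fun X Y => by
    rw [hβ, hβ, hα Y X, hα (J Y) (J X)]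
  have hsnd : ∀ X Y, (β Y X).2 = -(β X Y).2 := fun X Y => by
    rw [hβ, hβ, hα Y (J X), hα (J Y) X, neg_sub]
  intro X Y Z T
  have h := hflat X Y T Z
  rw [hfst Z T, hsnd Z T, hfst Y T, hsnd Y T, inner_neg_right, inner_neg_right] at h
  simp only [toWithLp2_apply, WithLp.prod_inner_apply]
  linarith

theorem toWithLp2_apply_apply_J (hJ : ∀ v : V, J (J v) = -v)
    (hβ : ∀ X Y : V, β X Y = (α X Y + α (J X) (J Y), α X (J Y) - α (J X) Y)) (X Y : V) :
    toWithLp2 β X (J Y) = rotateL2 (toWithLp2 β X Y) := by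
  rw [toWithLp2_apply, toWithLp2_apply, rotateL2_toLp, hβ, hβ, hJ]
  congr 2 <;> simp only [map_neg] <;> abel

theorem toWithLp2_J_apply (hJ : ∀ v : V, J (J v) = -v)
    (hβ : ∀ X Y : V, β X Y = (α X Y + α (J X) (J Y), α X (J Y) - α (J X) Y)) (X Y : V) :
    toWithLp2 β (J X) Y = -rotateL2 (toWithLp2 β X Y) := by
  rw [toWithLp2_apply, toWithLp2_apply, rotateL2_toLp, hβ, hβ, hJ, ← WithLp.toLp_neg,
    Prod.neg_mk]
  congr 2 <;> simp only [map_neg, LinearMap.neg_apply] <;> abel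

end WithLp2

/-- (Fact 2) If `dim V = 2p`, `p ≥ 1`, `β` is flat and `N(β) = 0`, then there is
`Z₀ ∈ V` with `dim ker B_{Z₀} = 2(p-1)`. -/
theorem stmt_11
    {V U : Type*} [AddCommGroup V] [Module ℝ V] [FiniteDimensional ℝ V]
    [NormedAddCommGroup U] [InnerProductSpace ℝ U] [FiniteDimensional ℝ U]
    (p : ℕ) (hp : 1 ≤ p) (hV : finrank ℝ V = 2 * p) (hU : finrank ℝ U = p)
    (J : V →ₗ[ℝ] V) (hJ : ∀ v : V, J (J v) = -v)
    (α : V →ₗ[ℝ] V →ₗ[ℝ] U) (hα : ∀ X Y : V, α X Y = α Y X)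
    (β : V →ₗ[ℝ] V →ₗ[ℝ] (U × U))
    (hβ : ∀ X Y : V, β X Y = (α X Y + α (J X) (J Y), α X (J Y) - α (J X) Y))
    (hflat : ∀ X Y Z T : V,
      ⟪(β X Y).1, (β Z T).1⟫ - ⟪(β X Y).2, (β Z T).2⟫ =
        ⟪(β X T).1, (β Z Y).1⟫ - ⟪(β X T).2, (β Z Y).2⟫)
    (hker : (⨅ X : V, LinearMap.ker (β X)) = ⊥) :
    ∃ Z₀ : V, finrank ℝ ↥(LinearMap.ker (β Z₀)) = 2 * (p - 1) := by
  have hG : (toWithLp2 β).IsInnerFlat := isInnerFlat_toWithLp2 hα hβ hflat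
  have hdiag : ∀ Y, toWithLp2 β Y Y = 0 → Y = 0 := fun Y =>
    hG.eq_zero_of_apply_self_eq_zero (by simpa only [ker_toWithLp2] using hker)
  have : Nontrivial V := Module.nontrivial_of_finrank_pos (R := ℝ) (by omega)
  have hE : finrank ℝ (WithLp 2 (U × U)) = finrank ℝ V := by
    rw [(WithLp.linearEquiv 2 ℝ (U × U)).finrank_eq, Module.finrank_prod, hU, hV]
    ring
  obtain ⟨Z₀, hZ₀⟩ := hG.exists_finrank_range_eq_two hdiag J hJ rotateL2
    (toWithLp2_J_apply hJ hβ) (toWithLp2_apply_apply_J hJ hβ) hE.le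
  refine ⟨Z₀, ?_⟩
  have := (toWithLp2 β Z₀).finrank_range_add_finrank_ker
  rw [ker_toWithLp2, hZ₀, hV] at this
  omega
end

section
/- Let V have dimension 2p, let U have dimension p, let α : V × V → U be a symmetric bilinear map, and let β(X,Y) = (α(X,Y)+α(JX,JY), α(X,JY)-α(JX,Y)). Assume β is flat with respect to the signature-(p,p) bilinear form on U × U and that its kernel N(β) is zero. Let X ∈ V be such that the linear map B_X : Y ↦ β(X,Y) has nontrivial kernel and X ≠ 0, and set U₁ = π₁(B_X(V)) ⊆ U, where π₁ : U × U → U is the projection onto the first factor. Then B_X(V) = U₁ × U₁ and moreover B_X(V) = {β(Z,X) : Z ∈ V}. -/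
/-!
Let `D = prodInner U` and `c (u, v) = (u, -v)`. Then `⟨⟨a, b⟩⟩ = D a (c b)` and `β Y X = c (β X Y)`,
so flatness becomes `D (β X Y) (β T Z) = D (β X T) (β Y Z)` for the positive definite form `D`.
In particular `D (β A B) (β A B) = D (β A A) (β B B) ≥ 0`, which gives
`ker β_(A+B) = ker β_A ⊓ ker β_B` whenever `β A B = 0`. Adding kernel vectors one at a time yields
`T` with `β X T = 0` and `β_(X+T)` injective, hence bijective since `dim V = dim (U × U)`. For such
`T`, `range β_T` is the `D`-orthogonal complement of `range β_X`, `V = ker β_T ⊕ ker β_X`, and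
`β (ker β_T) (ker β_T) ⊥ range β_T`; as `X ∈ ker β_T`, this gives `β Y X ∈ range β_X` for all `Y`.
Finally `range β_X` is stable under `c` and, through `J`, under `(u, v) ↦ (v, -u)`, which forces it
to be `U₁ × U₁`.
-/

open Module RealInnerProductSpace
open LinearMap (ker)

section Flat

variable {V W : Type*} [AddCommGroup V] [Module ℝ V] [AddCommGroup W] [Module ℝ W]
  {D : LinearMap.BilinForm ℝ W} {β : V →ₗ[ℝ] V →ₗ[ℝ] W}

theorem flat_apply_self (hflat : ∀ X Y Z T, D (β X Y) (β T Z) = D (β X T) (β Y Z)) (A B : V) :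
    D (β A B) (β A B) = D (β A A) (β B B) :=
  hflat A B B A

theorem apply_eq_zero_iff_of_flat (hDdef : ∀ w, D w w = 0 → w = 0)
    (hflat : ∀ X Y Z T, D (β X Y) (β T Z) = D (β X T) (β Y Z)) (A B : V) :
    β A B = 0 ↔ D (β A A) (β B B) = 0 := by
  rw [← flat_apply_self hflat]
  exact ⟨fun h => by simp [h], hDdef _⟩

theorem apply_self_ne_zero_of_flat (hDdef : ∀ w, D w w = 0 → w = 0)
    (hflat : ∀ X Y Z T, D (β X Y) (β T Z) = D (β X T) (β Y Z))
    (hker : ⨅ X, ker (β X) = ⊥) {A : V} (hA : A ≠ 0) : β A A ≠ 0 := by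
  refine fun hAA => hA ?_
  rw [← Submodule.mem_bot ℝ, ← hker, Submodule.mem_iInf]
  intro Z
  rw [LinearMap.mem_ker, apply_eq_zero_iff_of_flat hDdef hflat, hAA, map_zero]

theorem ker_add_eq_inf_of_flat (hDpos : ∀ w, 0 ≤ D w w) (hDdef : ∀ w, D w w = 0 → w = 0)
    (hsymm : ∀ A B, β A B = 0 → β B A = 0)
    (hflat : ∀ X Y Z T, D (β X Y) (β T Z) = D (β X T) (β Y Z)) {A B : V} (hAB : β A B = 0) :
    ker (β (A + B)) = ker (β A) ⊓ ker (β B) := by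
  ext Z
  simp only [Submodule.mem_inf, LinearMap.mem_ker]
  have hsum : D (β (A + B) (A + B)) (β Z Z) = D (β A A) (β Z Z) + D (β B B) (β Z Z) := by
    simp only [map_add, LinearMap.add_apply, hAB, hsymm A B hAB, add_zero, zero_add]
  have hA := flat_apply_self hflat A Z ▸ hDpos (β A Z)
  have hB := flat_apply_self hflat B Z ▸ hDpos (β B Z)
  simp only [apply_eq_zero_iff_of_flat hDdef hflat, hsum]
  constructor
  · intro h; constructor <;> linarith
  · rintro ⟨h₁, h₂⟩; rw [h₁, h₂, add_zero]

theorem exists_apply_eq_zero_ker_add_eq_bot [FiniteDimensional ℝ V]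
    (hDpos : ∀ w, 0 ≤ D w w) (hDdef : ∀ w, D w w = 0 → w = 0)
    (hsymm : ∀ A B, β A B = 0 → β B A = 0)
    (hflat : ∀ X Y Z T, D (β X Y) (β T Z) = D (β X T) (β Y Z))
    (hker : ⨅ X, ker (β X) = ⊥) (X : V) :
    ∃ T, β X T = 0 ∧ ker (β (X + T)) = ⊥ := by
  induction hn : finrank ℝ (ker (β X)) using Nat.strong_induction_on generalizing X with
  | _ n ih =>
  by_cases hK : ker (β X) = ⊥
  · exact ⟨0, map_zero _, by rwa [add_zero]⟩
  obtain ⟨Y, hY, hY0⟩ := (Submodule.ne_bot_iff _).mp hK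
  have hXY : β X Y = 0 := hY
  have hsplit := ker_add_eq_inf_of_flat hDpos hDdef hsymm hflat hXY
  have hlt : ker (β (X + Y)) < ker (β X) := by
    rw [hsplit]
    exact inf_lt_left.mpr fun h => apply_self_ne_zero_of_flat hDdef hflat hker hY0 (h hY)
  obtain ⟨T, hT, hreg⟩ := ih _ (hn ▸ Submodule.finrank_lt_finrank_of_lt hlt) (X + Y) rfl
  have hXT : β X T = 0 := (hsplit.le hT).1
  exact ⟨Y + T, by rw [map_add, hXY, hXT, add_zero], by rwa [← add_assoc]⟩

theorem LinearMap.BilinForm.nondegenerate_of_apply_self_eq_zero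
    (hDdef : ∀ w, D w w = 0 → w = 0) : D.Nondegenerate :=
  ⟨fun w h => hDdef w (h w), fun w h => hDdef w (h w)⟩

theorem range_le_orthogonal_range_of_flat
    (hflat : ∀ X Y Z T, D (β X Y) (β T Z) = D (β X T) (β Y Z)) {X T : V} (hXT : β X T = 0) :
    LinearMap.range (β T) ≤ D.orthogonal (LinearMap.range (β X)) := by
  rintro _ ⟨Z, rfl⟩ _ ⟨Y, rfl⟩
  simp [hflat X Y Z T, hXT]

section FiniteDimensional

variable [FiniteDimensional ℝ V] [FiniteDimensional ℝ W]

theorem range_eq_orthogonal_range_of_flat (hDdef : ∀ w, D w w = 0 → w = 0)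
    (hflat : ∀ X Y Z T, D (β X Y) (β T Z) = D (β X T) (β Y Z))
    (hdim : finrank ℝ V = finrank ℝ W) {X T : V} (hXT : β X T = 0)
    (hreg : ker (β (X + T)) = ⊥) :
    LinearMap.range (β T) = D.orthogonal (LinearMap.range (β X)) := by
  have hsup : LinearMap.range (β X) ⊔ LinearMap.range (β T) = ⊤ := by
    rw [eq_top_iff, ← (LinearMap.ker_eq_bot_iff_range_eq_top_of_finrank_eq_finrank hdim).mp hreg]
    rintro _ ⟨Y, rfl⟩
    rw [map_add, LinearMap.add_apply]
    exact Submodule.add_mem_sup (LinearMap.mem_range_self _ Y) (LinearMap.mem_range_self _ Y)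
  refine Submodule.eq_of_le_of_finrank_le (range_le_orthogonal_range_of_flat hflat hXT) ?_
  have := Submodule.finrank_sup_add_finrank_inf_eq (LinearMap.range (β X)) (LinearMap.range (β T))
  rw [hsup, finrank_top] at this
  rw [LinearMap.BilinForm.finrank_orthogonal
    (LinearMap.BilinForm.nondegenerate_of_apply_self_eq_zero hDdef)]
  omega

theorem ker_sup_ker_eq_top_of_flat (hDdef : ∀ w, D w w = 0 → w = 0)
    (hflat : ∀ X Y Z T, D (β X Y) (β T Z) = D (β X T) (β Y Z))
    (hdim : finrank ℝ V = finrank ℝ W) {X T : V} (hXT : β X T = 0)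
    (hreg : ker (β (X + T)) = ⊥) :
    ker (β T) ⊔ ker (β X) = ⊤ := by
  have hdisj : ker (β T) ⊓ ker (β X) = ⊥ := by
    rw [eq_bot_iff, ← hreg]
    rintro Z ⟨hTZ, hXZ⟩
    rw [LinearMap.mem_ker, map_add, LinearMap.add_apply, LinearMap.mem_ker.mp hXZ,
      LinearMap.mem_ker.mp hTZ, add_zero]
  have hrank := congrArg (fun S : Submodule ℝ W => finrank ℝ S)
    (range_eq_orthogonal_range_of_flat hDdef hflat hdim hXT hreg)
  rw [LinearMap.BilinForm.finrank_orthogonal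
    (LinearMap.BilinForm.nondegenerate_of_apply_self_eq_zero hDdef)] at hrank
  have hsum := Submodule.finrank_sup_add_finrank_inf_eq (ker (β T)) (ker (β X))
  rw [hdisj, finrank_bot] at hsum
  have := LinearMap.finrank_range_add_finrank_ker (β T)
  have := LinearMap.finrank_range_add_finrank_ker (β X)
  have := Submodule.finrank_le (LinearMap.range (β X))
  apply Submodule.eq_top_of_finrank_eq
  omega

theorem apply_mem_range_of_mem_ker (hDsymm : D.IsSymm) (hDdef : ∀ w, D w w = 0 → w = 0)
    (hsymm : ∀ A B, β A B = 0 → β B A = 0)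
    (hflat : ∀ X Y Z T, D (β X Y) (β T Z) = D (β X T) (β Y Z))
    (hdim : finrank ℝ V = finrank ℝ W) {X T : V} (hXT : β X T = 0)
    (hreg : ker (β (X + T)) = ⊥) {Y₁ Y₂ : V} (h₁ : β T Y₁ = 0) :
    β Y₁ Y₂ ∈ LinearMap.range (β X) := by
  rw [← LinearMap.BilinForm.orthogonal_orthogonal
      (LinearMap.BilinForm.nondegenerate_of_apply_self_eq_zero hDdef) hDsymm.isRefl
      (LinearMap.range (β X)),
    ← range_eq_orthogonal_range_of_flat hDdef hflat hdim hXT hreg]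
  rintro _ ⟨Z, rfl⟩
  rw [hDsymm.eq, hflat Y₁ Y₂ Z T, hsymm T Y₁ h₁, map_zero, LinearMap.zero_apply]

theorem range_flip_le_range_of_flat (hDsymm : D.IsSymm) (hDpos : ∀ w, 0 ≤ D w w)
    (hDdef : ∀ w, D w w = 0 → w = 0) (hsymm : ∀ A B, β A B = 0 → β B A = 0)
    (hflat : ∀ X Y Z T, D (β X Y) (β T Z) = D (β X T) (β Y Z))
    (hker : ⨅ X, ker (β X) = ⊥) (hdim : finrank ℝ V = finrank ℝ W) (X : V) :
    LinearMap.range (β.flip X) ≤ LinearMap.range (β X) := by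
  obtain ⟨T, hXT, hreg⟩ := exists_apply_eq_zero_ker_add_eq_bot hDpos hDdef hsymm hflat hker X
  rintro _ ⟨Y, rfl⟩
  have hY : Y ∈ ker (β T) ⊔ ker (β X) := by
    rw [ker_sup_ker_eq_top_of_flat hDdef hflat hdim hXT hreg]
    exact Submodule.mem_top
  obtain ⟨Y₁, hY₁, Y₂, hY₂, rfl⟩ := Submodule.mem_sup.mp hY
  rw [LinearMap.flip_apply, map_add, LinearMap.add_apply, hsymm X Y₂ hY₂, add_zero]
  exact apply_mem_range_of_mem_ker hDsymm hDdef hsymm hflat hdim hXT hreg hY₁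

end FiniteDimensional

end Flat

theorem Submodule.eq_prod_map_fst_of_conj_rot_mem {K M : Type*} [DivisionRing K] [CharZero K]
    [AddCommGroup M] [Module K M] (S : Submodule K (M × M))
    (hconj : ∀ w ∈ S, (w.1, -w.2) ∈ S) (hrot : ∀ w ∈ S, (w.2, -w.1) ∈ S) :
    S = (S.map (LinearMap.fst K M M)).prod (S.map (LinearMap.fst K M M)) := by
  have hfst : ∀ w ∈ S, (w.1, (0 : M)) ∈ S := by
    intro w hw
    convert S.smul_mem (2⁻¹ : K) (S.add_mem hw (hconj w hw)) using 1
    ext <;> simp [← two_smul K, smul_smul]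
  have hsnd : ∀ w ∈ S, ((0 : M), w.1) ∈ S := fun w hw => by
    simpa using S.neg_mem (hrot _ (hfst w hw))
  refine le_antisymm (fun w hw => ⟨⟨w, hw, rfl⟩, ⟨_, hrot w hw, rfl⟩⟩) ?_
  rintro ⟨u, v⟩ ⟨⟨s, hs, rfl⟩, ⟨t, ht, rfl⟩⟩
  simpa using S.add_mem (hfst s hs) (hsnd t ht)

section ProdInner

variable {U : Type*} [NormedAddCommGroup U] [InnerProductSpace ℝ U]

variable (U) in
noncomputable def prodInner : LinearMap.BilinForm ℝ (U × U) :=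
  (innerₗ U).compl₁₂ (LinearMap.fst ℝ U U) (LinearMap.fst ℝ U U) +
    (innerₗ U).compl₁₂ (LinearMap.snd ℝ U U) (LinearMap.snd ℝ U U)

theorem prodInner_apply (w w' : U × U) : prodInner U w w' = ⟪w.1, w'.1⟫ + ⟪w.2, w'.2⟫ := rfl

theorem prodInner_isSymm : (prodInner U).IsSymm :=
  ⟨fun w w' => by rw [prodInner_apply, prodInner_apply, real_inner_comm w.1, real_inner_comm w.2]⟩

theorem prodInner_self_nonneg (w : U × U) : 0 ≤ prodInner U w w :=
  add_nonneg real_inner_self_nonneg real_inner_self_nonneg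

theorem prodInner_self_eq_zero {w : U × U} (h : prodInner U w w = 0) : w = 0 := by
  rw [prodInner_apply] at h
  have h₁ := real_inner_self_nonneg (x := w.1)
  have h₂ := real_inner_self_nonneg (x := w.2)
  exact Prod.ext (inner_self_eq_zero (𝕜 := ℝ).mp (by linarith))
    (inner_self_eq_zero (𝕜 := ℝ).mp (by linarith))

variable {V : Type*} [AddCommGroup V] [Module ℝ V] {β : V →ₗ[ℝ] V →ₗ[ℝ] (U × U)}

theorem apply_swap_eq_of_isSymm {J : V →ₗ[ℝ] V} {α : V →ₗ[ℝ] V →ₗ[ℝ] U}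
    (hα : ∀ X Y : V, α X Y = α Y X)
    (hβ : ∀ X Y : V, β X Y = (α X Y + α (J X) (J Y), α X (J Y) - α (J X) Y)) (X Y : V) :
    β Y X = ((β X Y).1, -(β X Y).2) := by
  rw [hβ, hβ, hα Y, hα (J Y), hα Y, hα (J Y), neg_sub]

theorem apply_J_eq {J : V →ₗ[ℝ] V} (hJ : ∀ v : V, J (J v) = -v) {α : V →ₗ[ℝ] V →ₗ[ℝ] U}
    (hβ : ∀ X Y : V, β X Y = (α X Y + α (J X) (J Y), α X (J Y) - α (J X) Y)) (X Y : V) :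
    β X (J Y) = ((β X Y).2, -(β X Y).1) := by
  simp only [hβ, hJ, map_neg, Prod.mk.injEq]
  constructor <;> abel

theorem prodInner_flat (hconj : ∀ X Y, β Y X = ((β X Y).1, -(β X Y).2))
    (hflat : ∀ X Y Z T : V,
      ⟪(β X Y).1, (β Z T).1⟫ - ⟪(β X Y).2, (β Z T).2⟫ =
        ⟪(β X T).1, (β Z Y).1⟫ - ⟪(β X T).2, (β Z Y).2⟫) (X Y Z T : V) :
    prodInner U (β X Y) (β T Z) = prodInner U (β X T) (β Y Z) := by
  have h := hflat X Y Z T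
  rw [hconj T Z, hconj Y Z] at h
  simp only [inner_neg_right, sub_neg_eq_add] at h
  rwa [prodInner_apply, prodInner_apply]

end ProdInner

theorem stmt_12_general
    {V U : Type*} [AddCommGroup V] [Module ℝ V] [FiniteDimensional ℝ V]
    [NormedAddCommGroup U] [InnerProductSpace ℝ U] [FiniteDimensional ℝ U]
    (p : ℕ) (hV : finrank ℝ V = 2 * p) (hU : finrank ℝ U = p)
    (J : V →ₗ[ℝ] V) (hJ : ∀ v : V, J (J v) = -v)
    (α : V →ₗ[ℝ] V →ₗ[ℝ] U) (hα : ∀ X Y : V, α X Y = α Y X)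
    (β : V →ₗ[ℝ] V →ₗ[ℝ] (U × U))
    (hβ : ∀ X Y : V, β X Y = (α X Y + α (J X) (J Y), α X (J Y) - α (J X) Y))
    (hflat : ∀ X Y Z T : V,
      ⟪(β X Y).1, (β Z T).1⟫ - ⟪(β X Y).2, (β Z T).2⟫ =
        ⟪(β X T).1, (β Z Y).1⟫ - ⟪(β X T).2, (β Z Y).2⟫)
    (hker : (⨅ X : V, LinearMap.ker (β X)) = ⊥)
    (X : V)
    (U₁ : Submodule ℝ U)
    (hU₁ : U₁ = Submodule.map (LinearMap.fst ℝ U U) (LinearMap.range (β X))) :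
    LinearMap.range (β X) = U₁.prod U₁ ∧
      LinearMap.range (β X) = LinearMap.range (β.flip X) := by
  have hconj := apply_swap_eq_of_isSymm hα hβ
  have hdim : finrank ℝ V = finrank ℝ (U × U) := by rw [finrank_prod, hU, hV, two_mul]
  have hflip_le : LinearMap.range (β.flip X) ≤ LinearMap.range (β X) :=
    range_flip_le_range_of_flat prodInner_isSymm prodInner_self_nonneg
      (fun _ => prodInner_self_eq_zero) (fun A B h => by rw [hconj, h]; simp)
      (prodInner_flat hconj hflat) hker hdim X
  -- `β Z X = c (β X Z) = c (β Y X) = β X Y` for the `Z` with `β X Z = β Y X`.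
  have hrange : LinearMap.range (β X) = LinearMap.range (β.flip X) := by
    refine le_antisymm ?_ hflip_le
    rintro _ ⟨Y, rfl⟩
    obtain ⟨Z, hZ⟩ := hflip_le ⟨Y, rfl⟩
    refine ⟨Z, ?_⟩
    rw [LinearMap.flip_apply] at hZ ⊢
    simp [hconj X Z, hZ, hconj X Y]
  refine ⟨?_, hrange⟩
  rw [hU₁]
  refine Submodule.eq_prod_map_fst_of_conj_rot_mem _ ?_ ?_
  · rintro _ ⟨Y, rfl⟩
    rw [← hconj, hrange]
    exact ⟨Y, rfl⟩
  · rintro _ ⟨Y, rfl⟩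
    exact ⟨J Y, apply_J_eq hJ hβ X Y⟩

/-- If `β` is flat with trivial kernel, `X ≠ 0` and `B_X` has nontrivial kernel,
then with `U₁ = π₁(B_X(V))` one has `B_X(V) = U₁ ⊕ U₁ = {β(Z,X) : Z ∈ V}`. -/
theorem stmt_12
    {V U : Type*} [AddCommGroup V] [Module ℝ V] [FiniteDimensional ℝ V]
    [NormedAddCommGroup U] [InnerProductSpace ℝ U] [FiniteDimensional ℝ U]
    (p : ℕ) (hV : finrank ℝ V = 2 * p) (hU : finrank ℝ U = p)
    (J : V →ₗ[ℝ] V) (hJ : ∀ v : V, J (J v) = -v)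
    (α : V →ₗ[ℝ] V →ₗ[ℝ] U) (hα : ∀ X Y : V, α X Y = α Y X)
    (β : V →ₗ[ℝ] V →ₗ[ℝ] (U × U))
    (hβ : ∀ X Y : V, β X Y = (α X Y + α (J X) (J Y), α X (J Y) - α (J X) Y))
    (hflat : ∀ X Y Z T : V,
      ⟪(β X Y).1, (β Z T).1⟫ - ⟪(β X Y).2, (β Z T).2⟫ =
        ⟪(β X T).1, (β Z Y).1⟫ - ⟪(β X T).2, (β Z Y).2⟫)
    (hker : (⨅ X : V, LinearMap.ker (β X)) = ⊥)
    (X : V) (hX : X ≠ 0) (hkerX : LinearMap.ker (β X) ≠ ⊥)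
    (U₁ : Submodule ℝ U)
    (hU₁ : U₁ = Submodule.map (LinearMap.fst ℝ U U) (LinearMap.range (β X))) :
    LinearMap.range (β X) = U₁.prod U₁ ∧
      LinearMap.range (β X) = LinearMap.range (β.flip X) :=
  stmt_12_general p hV hU J hJ α hα β hβ hflat hker X U₁ hU₁
end

section
/- Let V have dimension 2n, let U have dimension p with p ≤ n, let α : V × V → U be a symmetric bilinear map, and let β(X,Y) = (α(X,Y)+α(JX,JY), α(X,JY)-α(JX,Y)). Assume β is flat with respect to the signature-(p,p) bilinear form ⟨⟨,⟩⟩ on W = U × U and that its nullity satisfies ν(β) = 2(n-p). Then there exists a basis X₁, JX₁, …, X_n, JX_n of V such that: (i) N(β) = span{X_j, JX_j : p+1 ≤ j ≤ n}; (ii) β(Y_i, Y_j) = 0 whenever i ≠ j and Y_i ∈ span{X_i, JX_i}, Y_j ∈ span{X_j, JX_j}; (iii) the 2p vectors β(X_j, X_j), β(X_j, JX_j), 1 ≤ j ≤ p, form an orthonormal basis of W with respect to ⟨⟨,⟩⟩ (i.e. they are pairwise ⟨⟨,⟩⟩-orthogonal and each has ⟨⟨,⟩⟩-square-norm ±1).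 -/
open Module RealInnerProductSpace

/-!
Write `q X = (β X X).1`. The identities `β Y X = conj (β X Y)` and `β (J X) Y = i β X Y` (for the
complex structure `(ξ₁, ξ₂) ↦ (-ξ₂, ξ₁)` of `W`) together with flatness give
`⟪q X, q Y⟫ = ‖β X Y‖²`. Hence `β X Y = 0` exactly when `q X ⟂ q Y`, and `N(β)` is the zero set
of `q`. An `X₀` for which the span of the `q Y ⟂ q X₀` has least dimension has `ker β X₀ = N(β)`,
so by the nullity assumption `β X₀ : V → W` is onto. The operators `A_X` on `W` with
`A_X (β X₀ Y) = β X Y` commute with each other (by flatness) and with `i`, so they have a common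
complex eigenvector `β X₀ Y₁`; then every `β Y₁ X` lies on the complex line through `(q Y₁, 0)`.
After rescaling `Y₁` to `X₁`, the restriction of `β` to `ker β X₁` takes values in
`(q X₁)ᗮ × (q X₁)ᗮ` and satisfies the hypotheses with `n` and `p` lowered by one, so induction on
`p` produces the basis; for `p = 0` any complex basis of `(V, J)` will do.
-/

section ComplexStructure

variable {V : Type*} [AddCommGroup V] [Module ℝ V]

@[reducible] noncomputable def complexModuleOfSqEqNegOne (J : V →ₗ[ℝ] V)
    (hJ : ∀ v, J (J v) = -v) : Module ℂ V :=
  letI : SMul ℂ V := ⟨fun z v => z.re • v + z.im • J v⟩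
  Module.ofMinimalAxioms
    (fun z x y => by
      change z.re • (x + y) + z.im • J (x + y) = (z.re • x + z.im • J x) + (z.re • y + z.im • J y)
      rw [map_add]; module)
    (fun r s x => by
      change (r + s).re • x + (r + s).im • J x = (r.re • x + r.im • J x) + (s.re • x + s.im • J x)
      rw [Complex.add_re, Complex.add_im]; module)
    (fun r s x => by
      change (r * s).re • x + (r * s).im • J x
        = r.re • (s.re • x + s.im • J x) + r.im • J (s.re • x + s.im • J x)
      rw [Complex.mul_re, Complex.mul_im, map_add, map_smul, map_smul, hJ]; module)
    (fun x => by
      change (1 : ℂ).re • x + (1 : ℂ).im • J x = x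
      simp)

variable (J : V →ₗ[ℝ] V)

theorem complexModuleOfSqEqNegOne_smul_def (hJ : ∀ v, J (J v) = -v) (z : ℂ) (v : V) :
    letI := complexModuleOfSqEqNegOne J hJ; z • v = z.re • v + z.im • J v :=
  rfl

theorem isScalarTower_complexModuleOfSqEqNegOne (hJ : ∀ v, J (J v) = -v) :
    letI := complexModuleOfSqEqNegOne J hJ; IsScalarTower ℝ ℂ V := by
  let := complexModuleOfSqEqNegOne J hJ
  refine ⟨fun r z v => ?_⟩
  simp only [complexModuleOfSqEqNegOne_smul_def, Complex.real_smul, Complex.mul_re,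
    Complex.mul_im, Complex.ofReal_re, Complex.ofReal_im]
  module

theorem exists_span_range_sumElim_eq_top [FiniteDimensional ℝ V] (hJ : ∀ v, J (J v) = -v)
    {n : ℕ} (hV : finrank ℝ V = 2 * n) :
    ∃ X : Fin n → V, Submodule.span ℝ (Set.range (Sum.elim X fun i => J (X i))) = ⊤ := by
  let := complexModuleOfSqEqNegOne J hJ
  have := isScalarTower_complexModuleOfSqEqNegOne J hJ
  have : FiniteDimensional ℂ V := Module.Finite.of_restrictScalars_finite ℝ ℂ V
  have hn : finrank ℂ V = n := by
    have := Module.finrank_mul_finrank ℝ ℂ V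
    rw [Complex.finrank_real_complex, hV] at this
    omega
  let b := Complex.basisOneI.smulTower (Module.finBasisOfFinrankEq ℂ V hn)
  refine ⟨fun i => b (0, i), eq_top_iff.2 (b.span_eq.ge.trans (Submodule.span_mono ?_))⟩
  rintro _ ⟨⟨k, i⟩, rfl⟩
  fin_cases k
  · exact ⟨Sum.inl i, rfl⟩
  · refine ⟨Sum.inr i, ?_⟩
    simp [b, complexModuleOfSqEqNegOne_smul_def]

end ComplexStructure

theorem Module.End.exists_ne_zero_forall_apply_eq_smul {K M : Type*} [Field K] [IsAlgClosed K]
    [AddCommGroup M] [Module K M] [FiniteDimensional K M] [Nontrivial M]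
    (S : Set (Module.End K M)) (hS : ∀ A ∈ S, ∀ B ∈ S, Commute A B) :
    ∃ v ≠ (0 : M), ∀ A ∈ S, ∃ μ : K, A v = μ • v := by
  induction h : finrank K M using Nat.strong_induction_on generalizing M with
  | _ d ih =>
  by_cases hsplit : ∃ A ∈ S, ∃ μ : K, eigenspace A μ ≠ ⊥ ∧ eigenspace A μ ≠ ⊤
  · obtain ⟨A, hA, μ, hbot, htop⟩ := hsplit
    set E := eigenspace A μ
    have hmaps : ∀ B ∈ S, Set.MapsTo B E E := fun B hB =>
      mapsTo_genEigenspace_of_comm (hS A hA B hB) μ 1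
    have : Nontrivial E := Submodule.nontrivial_iff_ne_bot.mpr hbot
    obtain ⟨v, hv, hvS⟩ := ih (finrank K E) (h ▸ Submodule.finrank_lt htop)
      (Set.range fun B : S => (B : End K M).restrict (hmaps B B.2))
      (by rintro _ ⟨B, rfl⟩ _ ⟨C, rfl⟩; exact LinearMap.restrict_commute (hS B B.2 C C.2) _ _)
      rfl
    refine ⟨v, by simpa using hv, fun B hB => ?_⟩
    obtain ⟨μ, hμ⟩ := hvS _ ⟨⟨B, hB⟩, rfl⟩
    exact ⟨μ, congrArg Subtype.val hμ⟩
  · push Not at hsplit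
    obtain ⟨v, hv⟩ := exists_ne (0 : M)
    refine ⟨v, hv, fun A hA => ?_⟩
    obtain ⟨μ, hμ⟩ := A.exists_eigenvalue
    exact ⟨μ, mem_eigenspace_iff.mp (hsplit A hA μ hμ ▸ Submodule.mem_top)⟩

theorem exists_ne_zero_forall_apply_eq_smul_add_smul {W : Type*} [AddCommGroup W] [Module ℝ W]
    [FiniteDimensional ℝ W] [Nontrivial W] (J : W →ₗ[ℝ] W) (hJ : ∀ w, J (J w) = -w)
    (S : Set (Module.End ℝ W)) (hSJ : ∀ A ∈ S, Commute A J)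
    (hS : ∀ A ∈ S, ∀ B ∈ S, Commute A B) :
    ∃ w ≠ (0 : W), ∀ A ∈ S, ∃ a b : ℝ, A w = a • w + b • J w := by
  let := complexModuleOfSqEqNegOne J hJ
  have := isScalarTower_complexModuleOfSqEqNegOne J hJ
  have : FiniteDimensional ℂ W := Module.Finite.of_restrictScalars_finite ℝ ℂ W
  have hlin : ∀ A ∈ S, ∀ (z : ℂ) (w : W), A (z • w) = z • A w := fun A hA z w => by
    simp only [complexModuleOfSqEqNegOne_smul_def, map_add, map_smul]
    rw [← Module.End.mul_apply, hSJ A hA, Module.End.mul_apply]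
  let lift : S → Module.End ℂ W := fun A => ⟨(A : Module.End ℝ W).toAddHom, hlin A A.2⟩
  obtain ⟨w, hw, hwS⟩ := Module.End.exists_ne_zero_forall_apply_eq_smul (Set.range lift)
    (by
      rintro _ ⟨A, rfl⟩ _ ⟨B, rfl⟩
      exact LinearMap.ext fun w => LinearMap.congr_fun (hS A A.2 B B.2) w)
  refine ⟨w, hw, fun A hA => ?_⟩
  obtain ⟨μ, hμ⟩ := hwS _ ⟨⟨A, hA⟩, rfl⟩
  exact ⟨μ.re, μ.im, hμ⟩

theorem Fintype.card_fin_ge_of_le {n p : ℕ} (hpn : p ≤ n) :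
    Fintype.card {j : Fin n // p ≤ (j : ℕ)} = n - p := by
  have := Fintype.card_subtype_compl fun j : Fin n => (j : ℕ) < p
  simp only [not_lt, Fintype.card_fin] at this
  rw [this, Fintype.card_fin_lt_of_le hpn]

theorem Prod.norm_fst_sq_add_norm_snd_sq_eq_zero {E F : Type*} [NormedAddCommGroup E]
    [NormedAddCommGroup F] {w : E × F} : ‖w.1‖ ^ 2 + ‖w.2‖ ^ 2 = 0 ↔ w = 0 := by
  rw [add_eq_zero_iff_of_nonneg (by positivity) (by positivity)]
  simp [Prod.ext_iff]

section NeutralForm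

variable (U : Type*) [NormedAddCommGroup U] [InnerProductSpace ℝ U]

noncomputable def neutralForm : LinearMap.BilinForm ℝ (U × U) :=
  (innerₗ U).compl₁₂ (LinearMap.fst ℝ U U) (LinearMap.fst ℝ U U) -
    (innerₗ U).compl₁₂ (LinearMap.snd ℝ U U) (LinearMap.snd ℝ U U)

/-- Multiplication by `i` on `U × U ≅ U ⊗ ℂ`. -/
noncomputable def prodRotation : Module.End ℝ (U × U) :=
  (-LinearMap.snd ℝ U U).prod (LinearMap.fst ℝ U U)

variable {U}

theorem neutralForm_apply (w w' : U × U) : neutralForm U w w' = ⟪w.1, w'.1⟫ - ⟪w.2, w'.2⟫ :=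
  rfl

theorem neutralForm_comm (w w' : U × U) : neutralForm U w w' = neutralForm U w' w := by
  simp only [neutralForm_apply, real_inner_comm]

theorem neutralForm_apply_conj (w : U × U) :
    neutralForm U w (w.1, -w.2) = ‖w.1‖ ^ 2 + ‖w.2‖ ^ 2 := by
  simp only [neutralForm_apply, inner_neg_right, real_inner_self_eq_norm_sq]
  ring

theorem eq_zero_of_forall_neutralForm_eq_zero {w : U × U} (h : ∀ w', neutralForm U w w' = 0) :
    w = 0 :=
  Prod.norm_fst_sq_add_norm_snd_sq_eq_zero.1 (neutralForm_apply_conj w ▸ h (w.1, -w.2))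

theorem prodRotation_apply (w : U × U) : prodRotation U w = (-w.2, w.1) :=
  rfl

theorem prodRotation_prodRotation (w : U × U) : prodRotation U (prodRotation U w) = -w := by
  ext <;> simp [prodRotation_apply]

/-- If `(q, 0)` lies on the complex line through `w`, then `w` lies on the one through `(q, 0)`. -/
theorem exists_eq_smul_prod_smul {q : U} (hq : q ≠ 0) {w : U × U} {a b : ℝ}
    (h : ((q, 0) : U × U) = a • w + b • prodRotation U w) : ∃ c d : ℝ, w = (c • q, d • q) := by
  have h1 : q = a • w.1 - b • w.2 := by
    simpa [prodRotation_apply, sub_eq_add_neg] using congrArg Prod.fst h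
  have h2 : (0 : U) = a • w.2 + b • w.1 := by
    simpa [prodRotation_apply, add_comm] using congrArg Prod.snd h
  have hD : a ^ 2 + b ^ 2 ≠ 0 := by
    intro hD
    have ha : a = 0 := by nlinarith
    have hb : b = 0 := by nlinarith
    exact hq (by simpa [ha, hb] using h1)
  refine ⟨a / (a ^ 2 + b ^ 2), -b / (a ^ 2 + b ^ 2), Prod.ext ?_ ?_⟩ <;>
    refine smul_right_injective U hD ?_ <;> dsimp only <;>
    rw [smul_smul, mul_div_cancel₀ _ hD]
  · linear_combination (norm := module) (-a) • h1 - b • h2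
  · linear_combination (norm := module) b • h1 - a • h2

variable {ι : Type*} {e : ι → U}

theorem Orthonormal.neutralForm_sumElim_of_ne (he : Orthonormal ℝ e) {a b : ι ⊕ ι}
    (hab : a ≠ b) :
    neutralForm U (Sum.elim (fun j => (e j, 0)) (fun j => (0, -e j)) a)
      (Sum.elim (fun j => (e j, 0)) (fun j => (0, -e j)) b) = 0 := by
  rcases a with i | i <;> rcases b with j | j <;>
    simp_all [neutralForm_apply, he.inner_eq_zero]

theorem Orthonormal.neutralForm_sumElim_self (he : Orthonormal ℝ e) (a : ι ⊕ ι) :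
    neutralForm U (Sum.elim (fun j => (e j, 0)) (fun j => (0, -e j)) a)
        (Sum.elim (fun j => (e j, 0)) (fun j => (0, -e j)) a) = 1 ∨
      neutralForm U (Sum.elim (fun j => (e j, 0)) (fun j => (0, -e j)) a)
        (Sum.elim (fun j => (e j, 0)) (fun j => (0, -e j)) a) = -1 := by
  rcases a with i | i <;> simp [neutralForm_apply, he.1 i]

theorem Orthonormal.linearIndependent_sumElim (he : Orthonormal ℝ e) :
    LinearIndependent ℝ (Sum.elim (fun j => (e j, (0 : U))) (fun j => (0, -e j))) :=
  LinearMap.BilinForm.linearIndependent_of_iIsOrtho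
    (fun _ _ hab => he.neutralForm_sumElim_of_ne hab)
    (fun a => by rcases he.neutralForm_sumElim_self a with h | h <;> simp [h])

theorem Orthonormal.span_sumElim_eq_top [FiniteDimensional ℝ U] [Fintype ι]
    (he : Orthonormal ℝ e) (hcard : Fintype.card ι = finrank ℝ U) :
    Submodule.span ℝ (Set.range (Sum.elim (fun j => (e j, (0 : U))) fun j => (0, -e j))) = ⊤ :=
  he.linearIndependent_sumElim.span_eq_top_of_card_eq_finrank' (by simp [hcard])

end NeutralForm

def LinearMap.nullSpace {R V W : Type*} [CommRing R] [AddCommGroup V] [Module R V]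
    [AddCommGroup W] [Module R W] (β : V →ₗ[R] V →ₗ[R] W) : Submodule R V :=
  ⨅ X, LinearMap.ker (β X)

theorem LinearMap.mem_nullSpace {R V W : Type*} [CommRing R] [AddCommGroup V] [Module R V]
    [AddCommGroup W] [Module R W] {β : V →ₗ[R] V →ₗ[R] W} {Y : V} :
    Y ∈ β.nullSpace ↔ ∀ X, β X Y = 0 := by
  simp [LinearMap.nullSpace]

section FlatHermitian

variable {V U : Type*} [AddCommGroup V] [Module ℝ V] [NormedAddCommGroup U]
  [InnerProductSpace ℝ U]

/-- `β` is Hermitian for the complex structures `J` on `V` and `prodRotation U` on `U × U`,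
and flat for `neutralForm U`. -/
structure IsFlatHermitian (J : V →ₗ[ℝ] V) (β : V →ₗ[ℝ] V →ₗ[ℝ] U × U) : Prop where
  apply_swap : ∀ X Y, β Y X = ((β X Y).1, -(β X Y).2)
  apply_J_left : ∀ X Y, β (J X) Y = (-(β X Y).2, (β X Y).1)
  flat : ∀ X Y Z T, neutralForm U (β X Y) (β Z T) = neutralForm U (β X T) (β Z Y)

structure IsDiagonalFrame (J : V →ₗ[ℝ] V) (β : V →ₗ[ℝ] V →ₗ[ℝ] U × U) (p : ℕ) {n : ℕ}
    (X : Fin n → V) : Prop where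
  span_eq_top : Submodule.span ℝ (Set.range (Sum.elim X fun i => J (X i))) = ⊤
  apply_eq_zero : ∀ i j, i ≠ j → β (X i) (X j) = 0
  norm_fst_apply_self : ∀ j : Fin n, (j : ℕ) < p → ‖(β (X j) (X j)).1‖ = 1
  fst_apply_self : ∀ j : Fin n, p ≤ (j : ℕ) → (β (X j) (X j)).1 = 0

def LinearMap.codRestrictProd (β : V →ₗ[ℝ] V →ₗ[ℝ] U × U) (K : Submodule ℝ U)
    (h₁ : ∀ X Y, (β X Y).1 ∈ K) (h₂ : ∀ X Y, (β X Y).2 ∈ K) : V →ₗ[ℝ] V →ₗ[ℝ] K × K :=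
  LinearMap.mk₂ ℝ (fun X Y => (⟨(β X Y).1, h₁ X Y⟩, ⟨(β X Y).2, h₂ X Y⟩))
    (fun _ _ _ => by ext <;> simp) (fun _ _ _ => by ext <;> simp)
    (fun _ _ _ => by ext <;> simp) (fun _ _ _ => by ext <;> simp)

variable {J : V →ₗ[ℝ] V} {β : V →ₗ[ℝ] V →ₗ[ℝ] U × U}

theorem LinearMap.codRestrictProd_apply_eq_zero_iff {K : Submodule ℝ U} {h₁ h₂} {X Y : V} :
    β.codRestrictProd K h₁ h₂ X Y = 0 ↔ β X Y = 0 := by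
  simp [LinearMap.codRestrictProd, Prod.ext_iff]

theorem exists_norm_fst_apply_self_eq_one {Y : V} (hY : (β Y Y).1 ≠ 0)
    (h : ∀ X, ∃ a b : ℝ, β Y X = (a • (β Y Y).1, b • (β Y Y).1)) :
    ∃ X₁, ‖(β X₁ X₁).1‖ = 1 ∧ ∀ X, ∃ a b : ℝ, β X₁ X = (a • (β X₁ X₁).1, b • (β X₁ X₁).1) := by
  set t := (√‖(β Y Y).1‖)⁻¹
  have ht : t ≠ 0 := by positivity
  have htt : t * t * ‖(β Y Y).1‖ = 1 := by
    rw [← mul_inv, Real.mul_self_sqrt (norm_nonneg _), inv_mul_cancel₀ (norm_ne_zero_iff.2 hY)]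
  have hX₁ : (β (t • Y) (t • Y)).1 = (t * t) • (β Y Y).1 := by simp [smul_smul]
  refine ⟨t • Y, ?_, fun X => ?_⟩
  · rw [hX₁, norm_smul, Real.norm_of_nonneg (by positivity), htt]
  · obtain ⟨a, b, hab⟩ := h X
    refine ⟨a / t, b / t, ?_⟩
    rw [hX₁, map_smul, LinearMap.smul_apply, hab]
    ext <;> simp [smul_smul] <;> congr 1 <;> field_simp

namespace IsFlatHermitian

theorem of_symm (hJ : ∀ v, J (J v) = -v) {α : V →ₗ[ℝ] V →ₗ[ℝ] U}
    (hα : ∀ X Y, α X Y = α Y X)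
    (hβ : ∀ X Y, β X Y = (α X Y + α (J X) (J Y), α X (J Y) - α (J X) Y))
    (hflat : ∀ X Y Z T, neutralForm U (β X Y) (β Z T) = neutralForm U (β X T) (β Z Y)) :
    IsFlatHermitian J β where
  apply_swap X Y := by
    simp only [hβ, hα Y, hα (J Y), neg_sub]
  apply_J_left X Y := by
    simp only [hβ, hJ, map_neg, LinearMap.neg_apply]
    ext <;> simp only [neg_sub] <;> abel
  flat := hflat

theorem snd_apply_self (hβ : IsFlatHermitian J β) (X : V) : (β X X).2 = 0 := by
  have h := congrArg Prod.snd (hβ.apply_swap X X)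
  rw [eq_neg_iff_add_eq_zero, ← two_smul ℝ, smul_eq_zero] at h
  exact h.resolve_left two_ne_zero

theorem apply_self (hβ : IsFlatHermitian J β) (X : V) : β X X = ((β X X).1, 0) :=
  Prod.ext rfl (hβ.snd_apply_self X)

theorem apply_J_right (hβ : IsFlatHermitian J β) (X Y : V) :
    β X (J Y) = ((β X Y).2, -(β X Y).1) := by
  rw [hβ.apply_swap (J Y), hβ.apply_J_left, hβ.apply_swap X]
  simp

theorem apply_self_J (hβ : IsFlatHermitian J β) (X : V) : β X (J X) = (0, -(β X X).1) := by
  rw [hβ.apply_J_right, hβ.snd_apply_self]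

theorem fst_apply_J_self (hβ : IsFlatHermitian J β) (X : V) :
    (β (J X) (J X)).1 = (β X X).1 := by
  simp [hβ.apply_J_left, hβ.apply_J_right]

theorem inner_fst_apply_self (hβ : IsFlatHermitian J β) (X Y : V) :
    ⟪(β X X).1, (β Y Y).1⟫ = ‖(β X Y).1‖ ^ 2 + ‖(β X Y).2‖ ^ 2 := by
  have h := hβ.flat X Y Y X
  rw [hβ.apply_swap X Y, neutralForm_apply_conj, neutralForm_apply, hβ.snd_apply_self X] at h
  simpa using h.symm

theorem inner_fst_apply_self_nonneg (hβ : IsFlatHermitian J β) (X Y : V) :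
    0 ≤ ⟪(β X X).1, (β Y Y).1⟫ := by
  rw [hβ.inner_fst_apply_self]
  positivity

theorem apply_eq_zero_iff (hβ : IsFlatHermitian J β) {X Y : V} :
    β X Y = 0 ↔ ⟪(β X X).1, (β Y Y).1⟫ = 0 := by
  rw [hβ.inner_fst_apply_self, Prod.norm_fst_sq_add_norm_snd_sq_eq_zero]

theorem apply_eq_zero_comm (hβ : IsFlatHermitian J β) {X Y : V} : β X Y = 0 ↔ β Y X = 0 := by
  rw [hβ.apply_eq_zero_iff, hβ.apply_eq_zero_iff, real_inner_comm]

theorem apply_eq_zero_of_mem_span_pair (hβ : IsFlatHermitian J β) {X Y X' Y' : V}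
    (h : β X Y = 0) (hX' : X' ∈ Submodule.span ℝ {X, J X})
    (hY' : Y' ∈ Submodule.span ℝ {Y, J Y}) : β X' Y' = 0 := by
  obtain ⟨a, b, rfl⟩ := Submodule.mem_span_pair.1 hX'
  obtain ⟨c, d, rfl⟩ := Submodule.mem_span_pair.1 hY'
  simp [hβ.apply_J_left, hβ.apply_J_right, h]

theorem mem_nullSpace_iff (hβ : IsFlatHermitian J β) {Y : V} :
    Y ∈ β.nullSpace ↔ (β Y Y).1 = 0 := by
  refine ⟨fun h => congrArg Prod.fst (LinearMap.mem_nullSpace.1 h Y), fun h => ?_⟩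
  exact LinearMap.mem_nullSpace.2 fun X => hβ.apply_eq_zero_iff.2 (by rw [h, inner_zero_right])

theorem fst_apply_add_self (hβ : IsFlatHermitian J β) {X Y : V} (h : β X Y = 0) :
    (β (X + Y) (X + Y)).1 = (β X X).1 + (β Y Y).1 := by
  simp [h, hβ.apply_eq_zero_comm.1 h]

/-- `X₀` minimizes the dimension of the span of the `(β Y Y).1` orthogonal to `(β X₀ X₀).1`. -/
theorem exists_ker_eq_nullSpace (hβ : IsFlatHermitian J β) [FiniteDimensional ℝ U] :
    ∃ X₀, LinearMap.ker (β X₀) = β.nullSpace := by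
  let Q : V → Submodule ℝ U := fun X =>
    Submodule.span ℝ {u | ∃ Y, u = (β Y Y).1 ∧ ⟪(β X X).1, (β Y Y).1⟫ = 0}
  set X₀ := Function.argmin fun X => finrank ℝ (Q X)
  have hreg : ∀ Y, ⟪(β X₀ X₀).1, (β Y Y).1⟫ = 0 → (β Y Y).1 = 0 := by
    intro Y hY
    by_contra hY0
    have hadd := hβ.fst_apply_add_self (hβ.apply_eq_zero_iff.2 hY)
    have hsplit : ∀ T, ⟪(β (X₀ + Y) (X₀ + Y)).1, (β T T).1⟫ = 0 →
        ⟪(β X₀ X₀).1, (β T T).1⟫ = 0 ∧ ⟪(β Y Y).1, (β T T).1⟫ = 0 := by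
      intro T hT
      rw [hadd, inner_add_left] at hT
      have := hβ.inner_fst_apply_self_nonneg X₀ T
      have := hβ.inner_fst_apply_self_nonneg Y T
      constructor <;> linarith
    have hle : Q (X₀ + Y) ≤ Q X₀ ⊓ (ℝ ∙ (β Y Y).1)ᗮ := by
      refine Submodule.span_le.2 ?_
      rintro _ ⟨T, rfl, hT⟩
      exact ⟨Submodule.subset_span ⟨T, rfl, (hsplit T hT).1⟩,
        Submodule.mem_orthogonal_singleton_iff_inner_right.2 (hsplit T hT).2⟩
    have hlt : Q (X₀ + Y) < Q X₀ := by
      refine lt_of_le_of_ne (hle.trans inf_le_left) fun h => hY0 ?_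
      have hmem : (β Y Y).1 ∈ Q (X₀ + Y) := h ▸ Submodule.subset_span ⟨Y, rfl, hY⟩
      exact inner_self_eq_zero.1
        (Submodule.mem_orthogonal_singleton_iff_inner_right.1 (hle hmem).2)
    exact (Submodule.finrank_lt_finrank_of_lt hlt).not_ge
      (Function.argmin_le (fun X => finrank ℝ (Q X)) _)
  refine ⟨X₀, Submodule.ext fun Y => ?_⟩
  rw [LinearMap.mem_ker, hβ.mem_nullSpace_iff, hβ.apply_eq_zero_iff]
  exact ⟨hreg Y, fun h => by rw [h, inner_zero_right]⟩

theorem exists_surjective [FiniteDimensional ℝ V] [FiniteDimensional ℝ U]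
    (hβ : IsFlatHermitian J β)
    (hdim : finrank ℝ β.nullSpace + 2 * finrank ℝ U = finrank ℝ V) :
    ∃ X₀, Function.Surjective (β X₀) := by
  obtain ⟨X₀, hX₀⟩ := hβ.exists_ker_eq_nullSpace
  refine ⟨X₀, LinearMap.range_eq_top.1 (Submodule.eq_top_of_finrank_eq ?_)⟩
  have := LinearMap.finrank_range_add_finrank_ker (β X₀)
  rw [← hX₀] at hdim
  rw [Module.finrank_prod]
  omega

theorem ker_le_ker_of_surjective (hβ : IsFlatHermitian J β) {X₀ : V}
    (hX₀ : Function.Surjective (β X₀)) (X : V) :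
    LinearMap.ker (β X₀) ≤ LinearMap.ker (β X) := by
  intro Y hY
  refine eq_zero_of_forall_neutralForm_eq_zero fun w => ?_
  obtain ⟨T, rfl⟩ := hX₀ w
  rw [hβ.flat, LinearMap.mem_ker.1 hY, map_zero]

/-- The operators `A_X` with `A_X (β X₀ Y) = β X Y` commute with each other and with
`prodRotation U`; a common complex eigenvector `β X₀ Y` of them gives the conclusion. -/
theorem exists_apply_eq_smul_add_smul (hβ : IsFlatHermitian J β) [FiniteDimensional ℝ U]
    [Nontrivial U] {X₀ : V} (hX₀ : Function.Surjective (β X₀)) :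
    ∃ Y, β X₀ Y ≠ 0 ∧ ∀ X, ∃ a b : ℝ, β X Y = a • β X₀ Y + b • prodRotation U (β X₀ Y) := by
  obtain ⟨s, hs⟩ := (β X₀).exists_rightInverse_of_surjective (LinearMap.range_eq_top.2 hX₀)
  have hs' : ∀ w, β X₀ (s w) = w := LinearMap.congr_fun hs
  have hA : ∀ X Y, β X (s (β X₀ Y)) = β X Y := fun X Y => by
    rw [← sub_eq_zero, ← map_sub]
    exact hβ.ker_le_ker_of_surjective hX₀ X (by simp [hs'])
  have hrot : ∀ X Y, prodRotation U (β X Y) = β X (-J Y) := fun X Y => by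
    simp [hβ.apply_J_right, prodRotation_apply]
  obtain ⟨w, hw, hwA⟩ := exists_ne_zero_forall_apply_eq_smul_add_smul (prodRotation U)
    prodRotation_prodRotation (Set.range fun X => β X ∘ₗ s)
    (by
      rintro _ ⟨X, rfl⟩
      refine LinearMap.ext fun w => ?_
      obtain ⟨Y, rfl⟩ := hX₀ w
      simp only [Module.End.mul_apply, LinearMap.comp_apply, hrot, hA])
    (by
      rintro _ ⟨X, rfl⟩ _ ⟨Z, rfl⟩
      refine LinearMap.ext fun w => ?_
      obtain ⟨Y, rfl⟩ := hX₀ w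
      simp only [Module.End.mul_apply, LinearMap.comp_apply, hA]
      rw [← sub_eq_zero]
      refine eq_zero_of_forall_neutralForm_eq_zero fun w' => ?_
      obtain ⟨T, rfl⟩ := hX₀ w'
      rw [LinearMap.map_sub₂, sub_eq_zero, hβ.flat, hβ.flat Z, hs', hs', hβ.flat X T,
        neutralForm_comm])
  refine ⟨s w, by rwa [hs'], fun X => ?_⟩
  obtain ⟨a, b, h⟩ := hwA _ ⟨X, rfl⟩
  exact ⟨a, b, by rwa [hs']⟩

theorem exists_forall_apply_eq_smul_prod_smul (hβ : IsFlatHermitian J β)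
    [FiniteDimensional ℝ U] [Nontrivial U] {X₀ : V} (hX₀ : Function.Surjective (β X₀)) :
    ∃ Y, (β Y Y).1 ≠ 0 ∧ ∀ X, ∃ a b : ℝ, β Y X = (a • (β Y Y).1, b • (β Y Y).1) := by
  obtain ⟨Y, hY, hA⟩ := hβ.exists_apply_eq_smul_add_smul hX₀
  have hq : (β Y Y).1 ≠ 0 := fun h =>
    hY (LinearMap.mem_nullSpace.1 (hβ.mem_nullSpace_iff.2 h) X₀)
  obtain ⟨a₀, b₀, h₀⟩ := hA Y
  obtain ⟨c, d, hcd⟩ := exists_eq_smul_prod_smul hq ((hβ.apply_self Y).symm.trans h₀)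
  refine ⟨Y, hq, fun X => ?_⟩
  obtain ⟨a, b, h⟩ := hA X
  refine ⟨a * c - b * d, -(a * d + b * c), ?_⟩
  rw [hβ.apply_swap X, h, hcd]
  ext <;> simp [prodRotation_apply] <;> module

theorem codRestrictProd (hβ : IsFlatHermitian J β) (K : Submodule ℝ U) (h₁ h₂) :
    IsFlatHermitian J (β.codRestrictProd K h₁ h₂) where
  apply_swap X Y := by ext <;> simp [LinearMap.codRestrictProd, hβ.apply_swap X Y]
  apply_J_left X Y := by ext <;> simp [LinearMap.codRestrictProd, hβ.apply_J_left X Y]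
  flat X Y Z T := by simpa [neutralForm_apply, LinearMap.codRestrictProd] using hβ.flat X Y Z T

theorem compl₁₂ (hβ : IsFlatHermitian J β) (S : Submodule ℝ V) (hS : ∀ v ∈ S, J v ∈ S) :
    IsFlatHermitian (J.restrict hS) (β.compl₁₂ S.subtype S.subtype) where
  apply_swap X Y := hβ.apply_swap X Y
  apply_J_left X Y := hβ.apply_J_left X Y
  flat X Y Z T := hβ.flat X Y Z T

theorem inner_fst_apply_eq_zero (hβ : IsFlatHermitian J β) {X₁ Z : V} (hZ : β X₁ Z = 0)
    (Y : V) : ⟪(β X₁ X₁).1, (β Y Z).1⟫ = 0 := by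
  simpa [neutralForm_apply, hZ, hβ.snd_apply_self] using hβ.flat X₁ X₁ Y Z

theorem inner_snd_apply_eq_zero (hβ : IsFlatHermitian J β) {X₁ Z : V} (hZ : β X₁ Z = 0)
    (Y : V) : ⟪(β X₁ X₁).1, (β Y Z).2⟫ = 0 := by
  simpa [neutralForm_apply, hZ, hβ.apply_self_J] using hβ.flat X₁ (J X₁) Y Z

theorem J_mem_ker (hβ : IsFlatHermitian J β) {X₁ Z : V} (hZ : Z ∈ LinearMap.ker (β X₁)) :
    J Z ∈ LinearMap.ker (β X₁) := by
  simp_all [hβ.apply_J_right]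

theorem sub_mem_ker (hβ : IsFlatHermitian J β) {X₁ Z : V} {a b : ℝ}
    (h : β X₁ Z = (a • (β X₁ X₁).1, b • (β X₁ X₁).1)) :
    Z - (a • X₁ - b • J X₁) ∈ LinearMap.ker (β X₁) := by
  ext <;> simp [h, hβ.snd_apply_self, hβ.apply_self_J]

theorem finrank_ker_add_two [FiniteDimensional ℝ V] (hβ : IsFlatHermitian J β) {X₁ : V}
    (hX₁ : (β X₁ X₁).1 ≠ 0)
    (h : ∀ X, ∃ a b : ℝ, β X₁ X = (a • (β X₁ X₁).1, b • (β X₁ X₁).1)) :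
    finrank ℝ (LinearMap.ker (β X₁)) + 2 = finrank ℝ V := by
  set L := (LinearMap.toSpanSingleton ℝ U (β X₁ X₁).1).prodMap
    (LinearMap.toSpanSingleton ℝ U (β X₁ X₁).1)
  have hL : Function.Injective L := by
    rw [← LinearMap.ker_eq_bot, eq_bot_iff]
    rintro ⟨a, b⟩ hab
    simp_all [L, Prod.ext_iff]
  have hrange : LinearMap.range (β X₁) = LinearMap.range L := by
    refine le_antisymm ?_ ?_
    · rintro _ ⟨Z, rfl⟩
      obtain ⟨a, b, hab⟩ := h Z
      exact ⟨(a, b), by simp [L, hab]⟩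
    · rintro _ ⟨⟨a, b⟩, rfl⟩
      refine ⟨a • X₁ - b • J X₁, ?_⟩
      ext <;> simp [L, hβ.snd_apply_self, hβ.apply_self_J]
  rw [← LinearMap.finrank_range_add_finrank_ker (β X₁), hrange,
    LinearMap.finrank_range_of_inj hL]
  simp [add_comm]

theorem finrank_nullSpace_codRestrictProd_compl₁₂ (hβ : IsFlatHermitian J β)
    {S : Submodule ℝ V} (hS : β.nullSpace ≤ S) (K : Submodule ℝ U) (h₁ h₂) :
    finrank ℝ ((β.compl₁₂ S.subtype S.subtype).codRestrictProd K h₁ h₂).nullSpace =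
      finrank ℝ β.nullSpace := by
  have : ((β.compl₁₂ S.subtype S.subtype).codRestrictProd K h₁ h₂).nullSpace =
      β.nullSpace.comap S.subtype := by
    ext Y
    simp only [LinearMap.mem_nullSpace, LinearMap.codRestrictProd_apply_eq_zero_iff,
      Submodule.mem_comap, Submodule.subtype_apply, LinearMap.compl₁₂_apply]
    exact ⟨fun h => LinearMap.mem_nullSpace.1 (hβ.mem_nullSpace_iff.2 (congrArg Prod.fst (h Y))),
      fun h Z => h Z⟩
  rw [this, (Submodule.comapSubtypeEquivOfLe hS).finrank_eq]

end IsFlatHermitian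

theorem isDiagonalFrame_zero [Subsingleton U] {n : ℕ} {X : Fin n → V}
    (hX : Submodule.span ℝ (Set.range (Sum.elim X fun i => J (X i))) = ⊤) :
    IsDiagonalFrame J β 0 X where
  span_eq_top := hX
  apply_eq_zero _ _ _ := Subsingleton.elim _ _
  norm_fst_apply_self _ h := absurd h (Nat.not_lt_zero _)
  fst_apply_self _ _ := Subsingleton.elim _ _

namespace IsDiagonalFrame

variable {p n : ℕ} {X : Fin n → V}

theorem of_codRestrictProd {K : Submodule ℝ U} {h₁ h₂}
    (hX : IsDiagonalFrame J (β.codRestrictProd K h₁ h₂) p X) : IsDiagonalFrame J β p X where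
  span_eq_top := hX.span_eq_top
  apply_eq_zero i j hij := LinearMap.codRestrictProd_apply_eq_zero_iff.1 (hX.apply_eq_zero i j hij)
  norm_fst_apply_self j hj := hX.norm_fst_apply_self j hj
  fst_apply_self j hj := congrArg Subtype.val (hX.fst_apply_self j hj)

theorem cons (hβ : IsFlatHermitian J β) {X₁ : V} (hX₁ : ‖(β X₁ X₁).1‖ = 1)
    (h : ∀ X, ∃ a b : ℝ, β X₁ X = (a • (β X₁ X₁).1, b • (β X₁ X₁).1))
    (hJ : ∀ v ∈ LinearMap.ker (β X₁), J v ∈ LinearMap.ker (β X₁))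
    {X' : Fin n → LinearMap.ker (β X₁)}
    (hX' : IsDiagonalFrame (J.restrict hJ)
      (β.compl₁₂ (LinearMap.ker (β X₁)).subtype (LinearMap.ker (β X₁)).subtype) p X') :
    IsDiagonalFrame J β (p + 1) (Fin.cons X₁ fun i => (X' i : V)) where
  span_eq_top := by
    set Xc : Fin (n + 1) → V := Fin.cons X₁ fun i => (X' i : V)
    set S := Submodule.span ℝ (Set.range (Sum.elim Xc fun i => J (Xc i)))
    have hker : LinearMap.ker (β X₁) ≤ S := by
      intro z hz
      have hz' := Submodule.apply_mem_span_image_of_mem_span (LinearMap.ker (β X₁)).subtype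
        (hX'.span_eq_top.ge (Submodule.mem_top (x := ⟨z, hz⟩)))
      refine Submodule.span_mono ?_ hz'
      rintro _ ⟨_, ⟨i | i, rfl⟩, rfl⟩
      exacts [⟨Sum.inl i.succ, rfl⟩, ⟨Sum.inr i.succ, rfl⟩]
    refine eq_top_iff.2 fun Z _ => ?_
    obtain ⟨a, b, hab⟩ := h Z
    rw [← sub_add_cancel Z (a • X₁ - b • J X₁)]
    exact S.add_mem (hker (hβ.sub_mem_ker hab)) (S.sub_mem
      (S.smul_mem a (Submodule.subset_span ⟨Sum.inl 0, rfl⟩))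
      (S.smul_mem b (Submodule.subset_span ⟨Sum.inr 0, rfl⟩)))
  apply_eq_zero i j hij := by
    cases i using Fin.cases <;> cases j using Fin.cases
    · exact absurd rfl hij
    · exact (X' _).2
    · exact hβ.apply_eq_zero_comm.1 (X' _).2
    · exact hX'.apply_eq_zero _ _ fun h => hij (congrArg Fin.succ h)
  norm_fst_apply_self j hj := by
    cases j using Fin.cases
    · exact hX₁
    · exact hX'.norm_fst_apply_self _ (by simpa using hj)
  fst_apply_self j hj := by
    cases j using Fin.cases
    · exact absurd hj (by simp)
    · exact hX'.fst_apply_self _ (by simpa using hj)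

theorem nullSpace_eq [FiniteDimensional ℝ V] (hβ : IsFlatHermitian J β)
    (hX : IsDiagonalFrame J β p X) (hli : LinearIndependent ℝ (Sum.elim X fun i => J (X i)))
    (hpn : p ≤ n) (hnul : finrank ℝ β.nullSpace = 2 * (n - p)) :
    β.nullSpace = Submodule.span ℝ {v | ∃ j : Fin n, p ≤ (j : ℕ) ∧ (v = X j ∨ v = J (X j))} := by
  refine (Submodule.eq_of_le_of_finrank_le ?_ ?_).symm
  · refine Submodule.span_le.2 ?_
    rintro _ ⟨j, hj, rfl | rfl⟩ <;> refine hβ.mem_nullSpace_iff.2 ?_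
    · exact hX.fst_apply_self j hj
    · rw [hβ.fst_apply_J_self]
      exact hX.fst_apply_self j hj
  · let ι := {j : Fin n // p ≤ (j : ℕ)}
    have hsub := hli.comp (Sum.map (Subtype.val : ι → Fin n) (Subtype.val : ι → Fin n))
      (Sum.map_injective.2 ⟨Subtype.val_injective, Subtype.val_injective⟩)
    rw [hnul, ← Fintype.card_fin_ge_of_le hpn, two_mul, ← Fintype.card_sum,
      ← finrank_span_eq_card hsub]
    refine Submodule.finrank_mono (Submodule.span_mono ?_)
    rintro _ ⟨j | j, rfl⟩
    exacts [⟨j, j.2, Or.inl rfl⟩, ⟨j, j.2, Or.inr rfl⟩]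

theorem orthonormal (hβ : IsFlatHermitian J β) (hX : IsDiagonalFrame J β p X)
    (hpn : p ≤ n) :
    Orthonormal ℝ fun j : Fin p => (β (X (Fin.castLE hpn j)) (X (Fin.castLE hpn j))).1 :=
  ⟨fun j => hX.norm_fst_apply_self _ j.2, fun _ _ hij =>
    hβ.apply_eq_zero_iff.1 (hX.apply_eq_zero _ _ ((Fin.castLE_injective hpn).ne hij))⟩

end IsDiagonalFrame

theorem IsFlatHermitian.exists_isDiagonalFrame [FiniteDimensional ℝ V] [FiniteDimensional ℝ U]
    (hJ : ∀ v, J (J v) = -v) (hβ : IsFlatHermitian J β) {n p : ℕ} (hpn : p ≤ n)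
    (hV : finrank ℝ V = 2 * n) (hU : finrank ℝ U = p)
    (hnul : finrank ℝ β.nullSpace = 2 * (n - p)) :
    ∃ X : Fin n → V, IsDiagonalFrame J β p X := by
  induction p generalizing n V U with
  | zero =>
    have : Subsingleton U := finrank_zero_iff.1 hU
    obtain ⟨X, hX⟩ := exists_span_range_sumElim_eq_top J hJ hV
    exact ⟨X, isDiagonalFrame_zero hX⟩
  | succ p ih =>
    obtain ⟨m, rfl⟩ : ∃ m, n = m + 1 := ⟨n - 1, by omega⟩
    have : Nontrivial U := Module.nontrivial_of_finrank_pos (R := ℝ) (by omega)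
    obtain ⟨X₀, hX₀⟩ := hβ.exists_surjective (by omega)
    obtain ⟨Y, hY, hYrank⟩ := hβ.exists_forall_apply_eq_smul_prod_smul hX₀
    obtain ⟨X₁, hX₁, hrank⟩ := exists_norm_fst_apply_self_eq_one hY hYrank
    have hq : (β X₁ X₁).1 ≠ 0 := norm_ne_zero_iff.1 (hX₁ ▸ one_ne_zero)
    have hJS : ∀ v ∈ LinearMap.ker (β X₁), J v ∈ LinearMap.ker (β X₁) := fun _ => hβ.J_mem_ker
    have hβ₁ := (hβ.compl₁₂ _ hJS).codRestrictProd (ℝ ∙ (β X₁ X₁).1)ᗮ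
      (fun Y Z => Submodule.mem_orthogonal_singleton_iff_inner_right.2
        (hβ.inner_fst_apply_eq_zero Z.2 Y))
      (fun Y Z => Submodule.mem_orthogonal_singleton_iff_inner_right.2
        (hβ.inner_snd_apply_eq_zero Z.2 Y))
    have hS : finrank ℝ (LinearMap.ker (β X₁)) = 2 * m := by
      have := hβ.finrank_ker_add_two hq hrank
      omega
    have hK : finrank ℝ (ℝ ∙ (β X₁ X₁).1)ᗮ = p := by
      have := (ℝ ∙ (β X₁ X₁).1).finrank_add_finrank_orthogonal
      rw [finrank_span_singleton hq] at this
      omega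
    obtain ⟨X', hX'⟩ := ih (fun v => Subtype.ext (hJ v)) hβ₁ (by omega) hS hK (by
      rw [hβ.finrank_nullSpace_codRestrictProd_compl₁₂
        (fun Y hY => LinearMap.mem_nullSpace.1 hY X₁), hnul]
      omega)
    exact ⟨_, hX'.of_codRestrictProd.cons hβ hX₁ hrank hJS⟩

end FlatHermitian

/-- Diagonalization of a flat `β` with `ν(β) = 2(n-p)`: there is a basis
`X₁, JX₁, …, X_n, JX_n` of `V` such that (i) `N(β)` is spanned by the
`X_j, JX_j` with `p+1 ≤ j ≤ n`; (ii) `β(Y_i,Y_j) = 0` for `i ≠ j` whenever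
`Y_k ∈ span{X_k, JX_k}`; (iii) the vectors `β(X_j,X_j), β(X_j,JX_j)`,
`1 ≤ j ≤ p`, form an orthonormal basis of `W = U × U` for the
signature-(p,p) form. -/
theorem stmt_13
    {V U : Type*} [AddCommGroup V] [Module ℝ V] [FiniteDimensional ℝ V]
    [NormedAddCommGroup U] [InnerProductSpace ℝ U] [FiniteDimensional ℝ U]
    (n p : ℕ) (hpn : p ≤ n) (hV : finrank ℝ V = 2 * n) (hU : finrank ℝ U = p)
    (J : V →ₗ[ℝ] V) (hJ : ∀ v : V, J (J v) = -v)
    (α : V →ₗ[ℝ] V →ₗ[ℝ] U) (hα : ∀ X Y : V, α X Y = α Y X)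
    (β : V →ₗ[ℝ] V →ₗ[ℝ] (U × U))
    (hβ : ∀ X Y : V, β X Y = (α X Y + α (J X) (J Y), α X (J Y) - α (J X) Y))
    (hflat : ∀ X Y Z T : V,
      ⟪(β X Y).1, (β Z T).1⟫ - ⟪(β X Y).2, (β Z T).2⟫ =
        ⟪(β X T).1, (β Z Y).1⟫ - ⟪(β X T).2, (β Z Y).2⟫)
    (hnul : finrank ℝ ↥(⨅ X : V, LinearMap.ker (β X)) = 2 * (n - p)) :
    ∃ X : Fin n → V,
      -- `X₁, JX₁, …, X_n, JX_n` is a basis of `V`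
      LinearIndependent ℝ (Sum.elim X (fun i : Fin n => J (X i))) ∧
      Submodule.span ℝ (Set.range (Sum.elim X (fun i : Fin n => J (X i)))) = ⊤ ∧
      -- (i)
      (⨅ Z : V, LinearMap.ker (β Z)) =
        Submodule.span ℝ
          {v : V | ∃ j : Fin n, p ≤ (j : ℕ) ∧ (v = X j ∨ v = J (X j))} ∧
      -- (ii)
      (∀ i j : Fin n, i ≠ j →
        ∀ Yi ∈ Submodule.span ℝ {X i, J (X i)},
          ∀ Yj ∈ Submodule.span ℝ {X j, J (X j)}, β Yi Yj = 0) ∧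
      -- (iii)
      (∃ c : Fin p ⊕ Fin p → U × U,
        (∀ j : Fin p,
          c (Sum.inl j) = β (X (Fin.castLE hpn j)) (X (Fin.castLE hpn j))) ∧
        (∀ j : Fin p,
          c (Sum.inr j) = β (X (Fin.castLE hpn j)) (J (X (Fin.castLE hpn j)))) ∧
        LinearIndependent ℝ c ∧
        Submodule.span ℝ (Set.range c) = ⊤ ∧
        (∀ a b : Fin p ⊕ Fin p, a ≠ b →
          ⟪(c a).1, (c b).1⟫ - ⟪(c a).2, (c b).2⟫ = 0) ∧
        (∀ a : Fin p ⊕ Fin p,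
          ⟪(c a).1, (c a).1⟫ - ⟪(c a).2, (c a).2⟫ = 1 ∨
          ⟪(c a).1, (c a).1⟫ - ⟪(c a).2, (c a).2⟫ = -1)) := by
  have hβ' : IsFlatHermitian J β := .of_symm hJ hα hβ hflat
  obtain ⟨X, hX⟩ := hβ'.exists_isDiagonalFrame hJ hpn hV hU hnul
  have hli : LinearIndependent ℝ (Sum.elim X fun i => J (X i)) :=
    linearIndependent_of_top_le_span_of_card_eq_finrank hX.span_eq_top.ge (by simp [hV]; ring)
  set e : Fin p → U := fun j => (β (X (Fin.castLE hpn j)) (X (Fin.castLE hpn j))).1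
  have he : Orthonormal ℝ e := hX.orthonormal hβ' hpn
  refine ⟨X, hli, hX.span_eq_top, hX.nullSpace_eq hβ' hli hpn hnul,
    fun i j hij _ hYi _ hYj =>
      hβ'.apply_eq_zero_of_mem_span_pair (hX.apply_eq_zero i j hij) hYi hYj,
    Sum.elim (fun j => (e j, 0)) (fun j => (0, -e j)),
    fun _ => (hβ'.apply_self _).symm, fun _ => (hβ'.apply_self_J _).symm,
    he.linearIndependent_sumElim, he.span_sumElim_eq_top (by simp [hU]),
    fun _ _ hab => he.neutralForm_sumElim_of_ne hab, he.neutralForm_sumElim_self⟩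
end

section
/- Let α : V × V → U be a symmetric bilinear map and let β(X,Y) = (α(X,Y)+α(JX,JY), α(X,JY)-α(JX,Y)). Let S(β) = span{β(X,Y) : X,Y ∈ V} ⊆ U × U and let V₁ = π₁(S(β)) ⊆ U be its image under the projection π₁ : U × U → U onto the first factor. Then S(β) = V₁ × V₁. -/
/-!
The generating set `{β X Y}` of `S(β)` is stable under the swap `(a, b) ↦ (b, a)`, since
`β (J Y) X = (β X Y).swap`, and under the conjugation `(a, b) ↦ (a, -b)`, since
`β Y X = ((β X Y).1, -(β X Y).2)`; both use the symmetry of `α`, the first also `J² = -1`.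
Hence so is `S(β)`, and a submodule of `U × U` stable under both maps contains
`(a, 0) = ½ ((a, b) + (a, -b))` and then `(0, a)` for every `a` in its first projection.
-/

namespace Submodule

variable {R M : Type*} [Ring R] [Invertible (2 : R)] [AddCommGroup M] [Module R M]

theorem mk_zero_mem_of_conj_mem {S : Submodule R (M × M)}
    (hconj : ∀ x y : M, (x, y) ∈ S → (x, -y) ∈ S) {x y : M} (h : (x, y) ∈ S) :
    (x, (0 : M)) ∈ S := by
  have hsum : ((2 : R) • x, (0 : M)) ∈ S := by
    simpa [two_smul] using S.add_mem h (hconj x y h)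
  simpa [smul_smul] using S.smul_mem (⅟2 : R) hsum

theorem eq_prod_map_fst_of_swap_mem_of_conj_mem (S : Submodule R (M × M))
    (hswap : ∀ x y : M, (x, y) ∈ S → (y, x) ∈ S)
    (hconj : ∀ x y : M, (x, y) ∈ S → (x, -y) ∈ S) :
    S = (S.map (LinearMap.fst R M M)).prod (S.map (LinearMap.fst R M M)) := by
  apply le_antisymm
  · rintro ⟨x, y⟩ h
    exact ⟨⟨_, h, rfl⟩, ⟨_, hswap x y h, rfl⟩⟩
  · rintro ⟨x, y⟩ ⟨⟨⟨x, y'⟩, hx, rfl⟩, ⟨⟨y, x'⟩, hy, rfl⟩⟩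
    have hx0 := mk_zero_mem_of_conj_mem hconj hx
    have h0y := hswap _ _ (mk_zero_mem_of_conj_mem hconj hy)
    simpa using S.add_mem hx0 h0y

end Submodule

section AssocForm

variable {R V U : Type*} [CommRing R] [AddCommGroup V] [Module R V] [AddCommGroup U] [Module R U]
  (J : V →ₗ[R] V) (α : V →ₗ[R] V →ₗ[R] U)

def assocForm (X Y : V) : U × U :=
  (α X Y + α (J X) (J Y), α X (J Y) - α (J X) Y)

variable {J α}

theorem assocForm_swap (hJ : ∀ v : V, J (J v) = -v) (hα : ∀ X Y : V, α X Y = α Y X) (X Y : V) :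
    (assocForm J α X Y).swap = assocForm J α (J Y) X := by
  simp only [assocForm, Prod.swap_prod_mk, hJ, map_neg, LinearMap.neg_apply, Prod.mk.injEq]
  rw [hα (J Y) X, hα Y (J X), hα (J Y) (J X), hα Y X]
  constructor <;> abel

theorem assocForm_conj (hα : ∀ X Y : V, α X Y = α Y X) (X Y : V) :
    ((assocForm J α X Y).1, -(assocForm J α X Y).2) = assocForm J α Y X := by
  simp only [assocForm]
  rw [hα Y X, hα (J Y) (J X), hα Y (J X), hα (J Y) X, neg_sub]

end AssocForm

theorem stmt_14_general
    {V U : Type*} [AddCommGroup V] [Module ℝ V]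
    [AddCommGroup U] [Module ℝ U]
    (J : V →ₗ[ℝ] V) (hJ : ∀ v : V, J (J v) = -v)
    (α : V →ₗ[ℝ] V →ₗ[ℝ] U) (hα : ∀ X Y : V, α X Y = α Y X)
    (β : V →ₗ[ℝ] V →ₗ[ℝ] (U × U))
    (hβ : ∀ X Y : V, β X Y = (α X Y + α (J X) (J Y), α X (J Y) - α (J X) Y))
    (S : Submodule ℝ (U × U))
    (hS : S = Submodule.span ℝ {w : U × U | ∃ X Y : V, β X Y = w}) :
    S = (Submodule.map (LinearMap.fst ℝ U U) S).prod
          (Submodule.map (LinearMap.fst ℝ U U) S) := by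
  set G : Set (U × U) := {w : U × U | ∃ X Y : V, β X Y = w}
  have hβ' : ∀ X Y : V, β X Y = assocForm J α X Y := hβ
  have hswapG : Set.MapsTo (LinearEquiv.prodComm ℝ U U) G G := by
    rintro _ ⟨X, Y, rfl⟩
    exact ⟨J Y, X, by rw [hβ', hβ', ← assocForm_swap hJ hα]; rfl⟩
  have hconjG : Set.MapsTo ((LinearMap.id).prodMap (-LinearMap.id) : U × U →ₗ[ℝ] U × U) G G := by
    rintro _ ⟨X, Y, rfl⟩
    exact ⟨Y, X, by rw [hβ', hβ', ← assocForm_conj hα]; rfl⟩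
  subst hS
  exact Submodule.eq_prod_map_fst_of_swap_mem_of_conj_mem _
    (fun x y h => Submodule.mapsTo_span hswapG h)
    (fun x y h => Submodule.mapsTo_span hconjG h)

/-- `S(β) = V₁ × V₁` where `V₁ = π₁(S(β))`. -/
theorem stmt_14
    {V U : Type*} [AddCommGroup V] [Module ℝ V] [FiniteDimensional ℝ V]
    [AddCommGroup U] [Module ℝ U] [FiniteDimensional ℝ U]
    (J : V →ₗ[ℝ] V) (hJ : ∀ v : V, J (J v) = -v)
    (α : V →ₗ[ℝ] V →ₗ[ℝ] U) (hα : ∀ X Y : V, α X Y = α Y X)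
    (β : V →ₗ[ℝ] V →ₗ[ℝ] (U × U))
    (hβ : ∀ X Y : V, β X Y = (α X Y + α (J X) (J Y), α X (J Y) - α (J X) Y))
    (S : Submodule ℝ (U × U))
    (hS : S = Submodule.span ℝ {w : U × U | ∃ X Y : V, β X Y = w}) :
    S = (Submodule.map (LinearMap.fst ℝ U U) S).prod
          (Submodule.map (LinearMap.fst ℝ U U) S) :=
  stmt_14_general J hJ α hα β hβ S hS
end

section
/- Let α : V × V → U be a symmetric bilinear map, and define β(X,Y) = (α(X,Y)+α(JX,JY), α(X,JY)-α(JX,Y)) and γ(X,Y) = (α(X,Y), α(X,JY)), both valued in W = U × U. Assume both β and γ are flat with respect to the signature-(p,p) bilinear form ⟨⟨,⟩⟩ on W, and that ⟨⟨β(X,Y), γ(Z,T)⟩⟩ = ⟨⟨β(X,T), γ(Z,Y)⟩⟩ for all X,Y,Z,T ∈ V. Let V₁ = π₁(S(β)) ⊆ U, where S(β) = span{β(X,Y) : X,Y ∈ V} and π₁ is projection onto the first factor, and let α_{V₁} = π_{V₁} ∘ α, where π_{V₁} : U → V₁ is the orthogonal projection. Then the kernel N(β) = {Y ∈ V : β(X,Y)=0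 for all X} equals the complex nullity space N_c(α_{V₁}) = {Y ∈ V : α_{V₁}(X,Y) = 0 and α_{V₁}(X,JY) = 0 for all X ∈ V}. -/
open Module RealInnerProductSpace

/-!
`β(X, JY)` is `β(X, Y)` rotated by a quarter turn, so both components of `β` take values in
`V₁`. If `β(·, Y) = 0`, the compatibility of `β` with `γ`, applied to `(Z, T)` and to `(T, Z)`,
makes `α(X, Y) = γ(X, Y).1` orthogonal to every `β(Z, T).1`, hence to `V₁`; the same holds for
`JY`, which lies in `N(β)` too. Conversely, if `α(·, Y)` and `α(·, JY)` are orthogonal to `V₁`,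
the components of `β(X, Y)` are combinations of such values, so lie in `V₁ ∩ V₁ᗮ = 0`.
-/

theorem Submodule.mem_orthogonal_map_fst_span_iff {𝕜 E F : Type*} [RCLike 𝕜]
    [NormedAddCommGroup E] [InnerProductSpace 𝕜 E] [AddCommGroup F] [Module 𝕜 F]
    {S : Set (E × F)} {u : E} :
    u ∈ ((span 𝕜 S).map (LinearMap.fst 𝕜 E F))ᗮ ↔ ∀ w ∈ S, inner 𝕜 w.1 u = 0 := by
  rw [map_span]
  refine ⟨fun h w hw ↦ h _ (subset_span ⟨w, hw, rfl⟩), fun h v hv ↦ ?_⟩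
  have hle : span 𝕜 (LinearMap.fst 𝕜 E F '' S) ≤ (𝕜 ∙ u)ᗮ := span_le.2 <| by
    rintro _ ⟨w, hw, rfl⟩
    exact mem_orthogonal_singleton_iff_inner_left.2 (h w hw)
  exact mem_orthogonal_singleton_iff_inner_left.1 (hle hv)

section

variable {V U : Type*} [AddCommGroup V] [Module ℝ V] [AddCommGroup U] [Module ℝ U]
  {J : V →ₗ[ℝ] V} {α : V →ₗ[ℝ] V →ₗ[ℝ] U} {β : V →ₗ[ℝ] V →ₗ[ℝ] (U × U)}

theorem apply_comm_eq_of_symmetric (hα : ∀ X Y : V, α X Y = α Y X)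
    (hβ : ∀ X Y : V, β X Y = (α X Y + α (J X) (J Y), α X (J Y) - α (J X) Y)) (Z T : V) :
    β T Z = ((β Z T).1, -(β Z T).2) := by
  simp only [hβ, hα T, hα (J T), neg_sub]

theorem apply_J_right_eq_rotate (hJ : ∀ v : V, J (J v) = -v)
    (hβ : ∀ X Y : V, β X Y = (α X Y + α (J X) (J Y), α X (J Y) - α (J X) Y)) (X Y : V) :
    β X (J Y) = ((β X Y).2, -(β X Y).1) := by
  simp only [hβ, hJ, map_neg]
  ext <;> dsimp only <;> abel

end

theorem inner_fst_eq_zero_of_forall_apply_eq_zero {V U : Type*} [AddCommGroup V] [Module ℝ V]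
    [NormedAddCommGroup U] [InnerProductSpace ℝ U] {β γ : V →ₗ[ℝ] V →ₗ[ℝ] (U × U)}
    (hswap : ∀ Z T : V, β T Z = ((β Z T).1, -(β Z T).2))
    (hmix : ∀ X Y Z T : V,
      ⟪(β X Y).1, (γ Z T).1⟫ - ⟪(β X Y).2, (γ Z T).2⟫ =
        ⟪(β X T).1, (γ Z Y).1⟫ - ⟪(β X T).2, (γ Z Y).2⟫)
    {Y : V} (hY : ∀ X : V, β X Y = 0) (X Z T : V) :
    ⟪(β Z T).1, (γ X Y).1⟫ = 0 := by
  have h₁ := hmix Z T X Y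
  have h₂ := hmix T Z X Y
  simp only [hY, hswap Z T, Prod.fst_zero, Prod.snd_zero, inner_zero_left, inner_neg_left]
    at h₁ h₂
  linarith

theorem stmt_15_general
    {V U : Type*} [AddCommGroup V] [Module ℝ V]
    [NormedAddCommGroup U] [InnerProductSpace ℝ U] [FiniteDimensional ℝ U]
    (J : V →ₗ[ℝ] V) (hJ : ∀ v : V, J (J v) = -v)
    (α : V →ₗ[ℝ] V →ₗ[ℝ] U) (hα : ∀ X Y : V, α X Y = α Y X)
    (β : V →ₗ[ℝ] V →ₗ[ℝ] (U × U))
    (hβ : ∀ X Y : V, β X Y = (α X Y + α (J X) (J Y), α X (J Y) - α (J X) Y))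
    (γ : V →ₗ[ℝ] V →ₗ[ℝ] (U × U))
    (hγ : ∀ X Y : V, γ X Y = (α X Y, α X (J Y)))
    (hmix : ∀ X Y Z T : V,
      ⟪(β X Y).1, (γ Z T).1⟫ - ⟪(β X Y).2, (γ Z T).2⟫ =
        ⟪(β X T).1, (γ Z Y).1⟫ - ⟪(β X T).2, (γ Z Y).2⟫)
    (V₁ : Submodule ℝ U)
    (hV₁ : V₁ = Submodule.map (LinearMap.fst ℝ U U)
      (Submodule.span ℝ {w : U × U | ∃ X Y : V, β X Y = w})) :
    ∀ Y : V, (∀ X : V, β X Y = 0) ↔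
      (∀ X : V, Submodule.orthogonalProjection V₁ (α X Y) = 0 ∧
        Submodule.orthogonalProjection V₁ (α X (J Y)) = 0) := by
  have hfst_mem (X Y : V) : (β X Y).1 ∈ V₁ :=
    hV₁ ▸ ⟨β X Y, Submodule.subset_span ⟨X, Y, rfl⟩, rfl⟩
  have hswap := apply_comm_eq_of_symmetric hα hβ
  have hJright := apply_J_right_eq_rotate hJ hβ
  intro Y
  simp only [Submodule.orthogonalProjectionOnto_eq_zero_iff]
  constructor
  · intro hY X
    have hJY (Z : V) : β Z (J Y) = 0 := by simp [hJright, hY]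
    subst hV₁
    simp only [Submodule.mem_orthogonal_map_fst_span_iff, Set.mem_ofPred_eq, forall_exists_index]
    refine ⟨?_, ?_⟩ <;> rintro _ Z T rfl
    · simpa [hγ] using inner_fst_eq_zero_of_forall_apply_eq_zero hswap hmix hY X Z T
    · simpa [hγ] using inner_fst_eq_zero_of_forall_apply_eq_zero hswap hmix hJY X Z T
  · intro h X
    have hsnd_mem : (β X Y).2 ∈ V₁ := by simpa [hJright] using hfst_mem X (J Y)
    refine Prod.ext (Submodule.disjoint_def.1 V₁.orthogonal_disjoint _ (hfst_mem X Y) ?_)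
      (Submodule.disjoint_def.1 V₁.orthogonal_disjoint _ hsnd_mem ?_)
    · rw [hβ]
      exact add_mem (h X).1 (h (J X)).2
    · rw [hβ]
      exact sub_mem (h X).2 (h (J X)).1

/-- If `β` and `γ` are flat and compatible, then `N(β) = N_c(α_{V₁})` where
`V₁ = π₁(S(β))` and `α_{V₁}` is `α` followed by the orthogonal projection onto `V₁`. -/
theorem stmt_15
    {V U : Type*} [AddCommGroup V] [Module ℝ V] [FiniteDimensional ℝ V]
    [NormedAddCommGroup U] [InnerProductSpace ℝ U] [FiniteDimensional ℝ U]
    (p : ℕ) (hU : finrank ℝ U = p)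
    (J : V →ₗ[ℝ] V) (hJ : ∀ v : V, J (J v) = -v)
    (α : V →ₗ[ℝ] V →ₗ[ℝ] U) (hα : ∀ X Y : V, α X Y = α Y X)
    (β : V →ₗ[ℝ] V →ₗ[ℝ] (U × U))
    (hβ : ∀ X Y : V, β X Y = (α X Y + α (J X) (J Y), α X (J Y) - α (J X) Y))
    (γ : V →ₗ[ℝ] V →ₗ[ℝ] (U × U))
    (hγ : ∀ X Y : V, γ X Y = (α X Y, α X (J Y)))
    (hβflat : ∀ X Y Z T : V,
      ⟪(β X Y).1, (β Z T).1⟫ - ⟪(β X Y).2, (β Z T).2⟫ =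
        ⟪(β X T).1, (β Z Y).1⟫ - ⟪(β X T).2, (β Z Y).2⟫)
    (hγflat : ∀ X Y Z T : V,
      ⟪(γ X Y).1, (γ Z T).1⟫ - ⟪(γ X Y).2, (γ Z T).2⟫ =
        ⟪(γ X T).1, (γ Z Y).1⟫ - ⟪(γ X T).2, (γ Z Y).2⟫)
    (hmix : ∀ X Y Z T : V,
      ⟪(β X Y).1, (γ Z T).1⟫ - ⟪(β X Y).2, (γ Z T).2⟫ =
        ⟪(β X T).1, (γ Z Y).1⟫ - ⟪(β X T).2, (γ Z Y).2⟫)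
    (V₁ : Submodule ℝ U)
    (hV₁ : V₁ = Submodule.map (LinearMap.fst ℝ U U)
      (Submodule.span ℝ {w : U × U | ∃ X Y : V, β X Y = w})) :
    ∀ Y : V, (∀ X : V, β X Y = 0) ↔
      (∀ X : V, Submodule.orthogonalProjection V₁ (α X Y) = 0 ∧
        Submodule.orthogonalProjection V₁ (α X (J Y)) = 0) :=
  stmt_15_general J hJ α hα β hβ γ hγ hmix V₁ hV₁
end
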